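/- arXiv:2412.07307 — 11 statements merged into one kernel-verified Lean document; each statement's English description precedes it below -/
import Mathlib

section
/- The region D = {(S,V,I₁,I₂,R) ∈ ℝ₊⁵ : S+V+I₁+I₂+R ≤ B/ω} is positively invariant: if (S,V,I₁,I₂,R) : [0,∞) → ℝ⁵ is a differentiable solution of the SVI₁I₂R system whose components remain nonnegative for all t ≥ 0 and whose initial total population satisfies S(0)+V(0)+I₁(0)+I₂(0)+R(0) ≤ B/ω, then S(t)+V(t)+I₁(t)+I₂(t)+R(t) ≤ B/ω for all t ≥ 0. -/
/-! The total population `N = S + V + I₁ + I₂ + R` satisfies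
`N' = B - ω N - ω₁ I₁ - ω₂ I₂ ≤ ω (B/ω - N)`: all infection, vaccination, waning and recovery
terms cancel in the sum. Multiplying by the integrating factor `exp (ω t)` turns this
differential inequality into the antitonicity of `(N - B/ω) exp (ω t)`, which starts `≤ 0`. -/

open Real Set

theorem hasDerivAt_sub_mul_exp {N : ℝ → ℝ} {N' K ω t : ℝ} (hN : HasDerivAt N N' t) :
    HasDerivAt (fun s => (N s - K) * exp (ω * s)) ((N' + ω * (N t - K)) * exp (ω * t)) t := by
  have hexp : HasDerivAt (fun s => exp (ω * s)) (exp (ω * t) * ω) t := by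
    simpa using ((hasDerivAt_id t).const_mul ω).exp
  exact ((hN.sub_const K).mul hexp).congr_deriv (by ring)

theorem le_of_hasDerivAt_le_mul_sub {N N' : ℝ → ℝ} {K ω : ℝ}
    (hN : ∀ t, 0 ≤ t → HasDerivAt N (N' t) t) (hN' : ∀ t, 0 ≤ t → N' t ≤ ω * (K - N t))
    (h₀ : N 0 ≤ K) : ∀ t, 0 ≤ t → N t ≤ K := by
  set g : ℝ → ℝ := fun s => (N s - K) * exp (ω * s)
  have hg : ∀ t, 0 ≤ t → HasDerivAt g ((N' t + ω * (N t - K)) * exp (ω * t)) t :=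
    fun t ht => hasDerivAt_sub_mul_exp (hN t ht)
  have hg_anti : AntitoneOn g (Ici 0) := by
    refine antitoneOn_of_hasDerivWithinAt_nonpos (convex_Ici 0)
      (fun t ht => (hg t ht).continuousAt.continuousWithinAt)
      (fun t ht => (hg t (interior_subset ht)).hasDerivWithinAt) fun t ht => ?_
    have ht : 0 ≤ t := interior_subset ht
    have : N' t + ω * (N t - K) ≤ 0 := by linarith [hN' t ht]
    exact mul_nonpos_of_nonpos_of_nonneg this (exp_pos _).le
  intro t ht
  have hgt : g t ≤ 0 := calc
    g t ≤ g 0 := hg_anti self_mem_Ici ht ht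
    _ = N 0 - K := by simp [g]
    _ ≤ 0 := sub_nonpos.mpr h₀
  exact sub_nonpos.mp (nonpos_of_mul_nonpos_left hgt (exp_pos _))

theorem region_positively_invariant_general
    (B ω β₁ β₂ α μ δ σ ω₁ ω₂ m r₁ r₂ : ℝ)
    (hω : 0 < ω)
    (hω₁ : 0 < ω₁) (hω₂ : 0 < ω₂)
    (S V I₁ I₂ R : ℝ → ℝ)
    (hS : ∀ t, 0 ≤ t → HasDerivAt S
      (B - ω * S t - β₁ * S t * I₁ t - β₂ * S t * I₂ t - α * S t + μ * V t + δ * R t) t)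
    (hV : ∀ t, 0 ≤ t → HasDerivAt V
      (-ω * V t - (1 - σ) * β₁ * V t * I₁ t - (1 - σ) * β₂ * V t * I₂ t + α * S t - μ * V t) t)
    (hI₁ : ∀ t, 0 ≤ t → HasDerivAt I₁
      (-(ω + ω₁ + m + r₁) * I₁ t + β₁ * S t * I₁ t + (1 - σ) * β₁ * V t * I₁ t) t)
    (hI₂ : ∀ t, 0 ≤ t → HasDerivAt I₂
      (-(ω + ω₂ + r₂) * I₂ t + m * I₁ t + β₂ * S t * I₂ t + (1 - σ) * β₂ * V t * I₂ t) t)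
    (hR : ∀ t, 0 ≤ t → HasDerivAt R (-(ω + δ) * R t + r₁ * I₁ t + r₂ * I₂ t) t)
    (hpos : ∀ t, 0 ≤ t → 0 ≤ S t ∧ 0 ≤ V t ∧ 0 ≤ I₁ t ∧ 0 ≤ I₂ t ∧ 0 ≤ R t)
    (hinit : S 0 + V 0 + I₁ 0 + I₂ 0 + R 0 ≤ B / ω) :
    ∀ t, 0 ≤ t → S t + V t + I₁ t + I₂ t + R t ≤ B / ω := by
  set N : ℝ → ℝ := fun t => S t + V t + I₁ t + I₂ t + R t
  have hN : ∀ t, 0 ≤ t → HasDerivAt N (B - ω * N t - ω₁ * I₁ t - ω₂ * I₂ t) t := by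
    intro t ht
    exact ((((hS t ht).add (hV t ht)).add (hI₁ t ht)).add (hI₂ t ht)).add (hR t ht)
      |>.congr_deriv (by ring)
  refine le_of_hasDerivAt_le_mul_sub (ω := ω) hN (fun t ht => ?_) hinit
  obtain ⟨-, -, hI₁_nonneg, hI₂_nonneg, -⟩ := hpos t ht
  rw [mul_sub, mul_div_cancel₀ B hω.ne']
  linarith [mul_nonneg hω₁.le hI₁_nonneg, mul_nonneg hω₂.le hI₂_nonneg]

/-- Positive invariance of the region D = {(S,V,I₁,I₂,R) ∈ ℝ₊⁵ : S+V+I₁+I₂+R ≤ B/ω}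
for the SVI₁I₂R model: a solution with nonnegative components and initial total
population at most B/ω keeps total population at most B/ω for all t ≥ 0. -/
theorem region_positively_invariant
    (B ω β₁ β₂ α μ δ σ ω₁ ω₂ m r₁ r₂ : ℝ)
    (hB : 0 < B) (hω : 0 < ω) (hβ₁ : 0 < β₁) (hβ₂ : 0 < β₂) (hα : 0 < α)
    (hμ : 0 < μ) (hδ : 0 < δ) (hσ : σ ∈ Set.Ioo (0 : ℝ) 1)
    (hω₁ : 0 < ω₁) (hω₂ : 0 < ω₂) (hm : 0 < m) (hr₁ : 0 < r₁) (hr₂ : 0 < r₂)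
    (S V I₁ I₂ R : ℝ → ℝ)
    (hS : ∀ t, 0 ≤ t → HasDerivAt S
      (B - ω * S t - β₁ * S t * I₁ t - β₂ * S t * I₂ t - α * S t + μ * V t + δ * R t) t)
    (hV : ∀ t, 0 ≤ t → HasDerivAt V
      (-ω * V t - (1 - σ) * β₁ * V t * I₁ t - (1 - σ) * β₂ * V t * I₂ t + α * S t - μ * V t) t)
    (hI₁ : ∀ t, 0 ≤ t → HasDerivAt I₁
      (-(ω + ω₁ + m + r₁) * I₁ t + β₁ * S t * I₁ t + (1 - σ) * β₁ * V t * I₁ t) t)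
    (hI₂ : ∀ t, 0 ≤ t → HasDerivAt I₂
      (-(ω + ω₂ + r₂) * I₂ t + m * I₁ t + β₂ * S t * I₂ t + (1 - σ) * β₂ * V t * I₂ t) t)
    (hR : ∀ t, 0 ≤ t → HasDerivAt R (-(ω + δ) * R t + r₁ * I₁ t + r₂ * I₂ t) t)
    (hpos : ∀ t, 0 ≤ t → 0 ≤ S t ∧ 0 ≤ V t ∧ 0 ≤ I₁ t ∧ 0 ≤ I₂ t ∧ 0 ≤ R t)
    (hinit : S 0 + V 0 + I₁ 0 + I₂ 0 + R 0 ≤ B / ω) :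
    ∀ t, 0 ≤ t → S t + V t + I₁ t + I₂ t + R t ≤ B / ω :=
  region_positively_invariant_general B ω β₁ β₂ α μ δ σ ω₁ ω₂ m r₁ r₂ hω hω₁ hω₂ S V I₁ I₂ R hS hV
    hI₁ hI₂ hR hpos hinit
end

section
/- Let F be the 2×2 diagonal matrix diag(β₁(S₀+(1−σ)V₀), β₂(S₀+(1−σ)V₀)) and let W be the 2×2 matrix with rows (ω+ω₁+m+r₁, 0) and (−m, ω+ω₂+r₂). Then W is invertible, the next-generation matrix K = F·W⁻¹ equals the lower-triangular matrix with diagonal entries R₀₁ and R₀₂ and with lower-left entry m·β₂(S₀+(1−σ)V₀)/((ω+ω₁+m+r₁)(ω+ω₂+r₂)), and the characteristic polynomial of K is (X − R₀₁)(X − R₀₂); in particular the eigenvalues of K are exactly R₀₁ and R₀₂. -/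
open Matrix Polynomial

/-- The next-generation matrix K = F·W⁻¹ of the SVI₁I₂R model: W is invertible,
K is the stated lower-triangular matrix with diagonal entries R₀₁ and R₀₂, its
characteristic polynomial is (X − R₀₁)(X − R₀₂), and its eigenvalues are exactly
R₀₁ and R₀₂. -/
theorem next_generation_matrix
    (B ω β₁ β₂ α μ δ σ ω₁ ω₂ m r₁ r₂ : ℝ)
    (hB : 0 < B) (hω : 0 < ω) (hβ₁ : 0 < β₁) (hβ₂ : 0 < β₂) (hα : 0 < α)
    (hμ : 0 < μ) (hδ : 0 < δ) (hσ : σ ∈ Set.Ioo (0 : ℝ) 1)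
    (hω₁ : 0 < ω₁) (hω₂ : 0 < ω₂) (hm : 0 < m) (hr₁ : 0 < r₁) (hr₂ : 0 < r₂)
    (S₀ V₀ R₀₁ R₀₂ : ℝ)
    (hS₀ : S₀ = B * (μ + ω) / (ω * (μ + ω + α)))
    (hV₀ : V₀ = α * B / (ω * (μ + ω + α)))
    (hR₀₁ : R₀₁ = β₁ * (B * (μ + ω) + (1 - σ) * α * B) /
      ((ω + ω₁ + m + r₁) * ω * (μ + ω + α)))
    (hR₀₂ : R₀₂ = β₂ * (B * (μ + ω) + (1 - σ) * α * B) /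
      ((ω + ω₂ + r₂) * ω * (μ + ω + α)))
    (F W : Matrix (Fin 2) (Fin 2) ℝ)
    (hF : F = !![β₁ * (S₀ + (1 - σ) * V₀), 0; 0, β₂ * (S₀ + (1 - σ) * V₀)])
    (hW : W = !![ω + ω₁ + m + r₁, 0; -m, ω + ω₂ + r₂]) :
    IsUnit W ∧
    F * W⁻¹ = !![R₀₁, 0;
      m * β₂ * (S₀ + (1 - σ) * V₀) / ((ω + ω₁ + m + r₁) * (ω + ω₂ + r₂)), R₀₂] ∧
    (F * W⁻¹).charpoly = (X - C R₀₁) * (X - C R₀₂) ∧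
    spectrum ℝ (F * W⁻¹) = {R₀₁, R₀₂} := by
  have ha : (0:ℝ) < ω + ω₁ + m + r₁ := by linarith
  have hb : (0:ℝ) < ω + ω₂ + r₂ := by linarith
  have hden : (0:ℝ) < ω * (μ + ω + α) := by positivity
  have ha' := ha.ne'
  have hb' := hb.ne'
  have hden' := hden.ne'
  have hdet : W.det = (ω + ω₁ + m + r₁) * (ω + ω₂ + r₂) := by
    simp [hW, Matrix.det_fin_two_of]
  have hUnit : IsUnit W := by
    rw [Matrix.isUnit_iff_isUnit_det, hdet, isUnit_iff_ne_zero]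
    positivity
  have hWinv : W⁻¹ = !![1 / (ω + ω₁ + m + r₁), 0;
      m / ((ω + ω₁ + m + r₁) * (ω + ω₂ + r₂)), 1 / (ω + ω₂ + r₂)] := by
    apply Matrix.inv_eq_right_inv
    rw [hW]
    ext i j
    fin_cases i <;> fin_cases j <;>
      simp [Matrix.mul_apply, Fin.sum_univ_two] <;> field_simp <;> ring
  have hSV : S₀ + (1 - σ) * V₀ = (B * (μ + ω) + (1 - σ) * α * B) / (ω * (μ + ω + α)) := by
    rw [hS₀, hV₀]; field_simp
  have hK : F * W⁻¹ = !![R₀₁, 0;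
      m * β₂ * (S₀ + (1 - σ) * V₀) / ((ω + ω₁ + m + r₁) * (ω + ω₂ + r₂)), R₀₂] := by
    rw [hF, hWinv]
    ext i j
    fin_cases i <;> fin_cases j <;>
      simp [Matrix.mul_apply, Fin.sum_univ_two, hSV, hR₀₁, hR₀₂] <;> field_simp <;> first | ring1 | exact Or.inl (by ring)
  have hcp : (F * W⁻¹).charpoly = (X - C R₀₁) * (X - C R₀₂) := by
    rw [hK, Matrix.charpoly, Matrix.det_fin_two]
    simp [charmatrix_apply_eq, charmatrix_apply_ne]
  refine ⟨hUnit, hK, hcp, ?_⟩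
  ext x
  rw [hK]
  simp only [spectrum.mem_iff, Matrix.isUnit_iff_isUnit_det, isUnit_iff_ne_zero, not_not,
    Set.mem_insert_iff, Set.mem_singleton_iff]
  have : (algebraMap ℝ (Matrix (Fin 2) (Fin 2) ℝ) x -
      !![R₀₁, 0; m * β₂ * (S₀ + (1 - σ) * V₀) / ((ω + ω₁ + m + r₁) * (ω + ω₂ + r₂)), R₀₂]).det
      = (x - R₀₁) * (x - R₀₂) := by
    rw [Matrix.det_fin_two]
    simp [Matrix.algebraMap_matrix_apply]
  rw [this, mul_eq_zero, sub_eq_zero, sub_eq_zero]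
end

section
/- The characteristic polynomial of J₀ factors as det(τI − J₀) = (τ+ω)(τ+ω+α+μ)(τ+(ω+ω₁+m+r₁)(1−R₀₁))(τ+(ω+ω₂+r₂)(1−R₀₂))(τ+ω+δ); in particular the eigenvalues of J₀ are −ω, −(ω+α+μ), −(ω+ω₁+m+r₁)(1−R₀₁), −(ω+ω₂+r₂)(1−R₀₂) and −(ω+δ). -/
/-!
At the disease-free equilibrium the infected rows of J₀ vanish in the (S, V) columns, so J₀ is
block upper triangular: an (S, V) block whose characteristic polynomial is
(τ + ω + α)(τ + ω + μ) − αμ = (τ + ω)(τ + ω + α + μ), followed by a lower triangular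
(I₁, I₂, R) block. On its diagonal, β(S₀ + (1 − σ)V₀) equals the removal rate times the
reproduction number, which turns the I₁ and I₂ entries into the factors with 1 − R₀ᵢ.
-/

open Matrix

section

variable {n K : Type*} [Fintype n] [DecidableEq n] [Field K]

theorem Matrix.mem_spectrum_iff_det_smul_one_sub_eq_zero (A : Matrix n n K) (τ : K) :
    τ ∈ spectrum K A ↔ (τ • (1 : Matrix n n K) - A).det = 0 := by
  rw [spectrum.mem_iff, Algebra.algebraMap_eq_smul_one, isUnit_iff_isUnit_det,
    isUnit_iff_ne_zero, not_not]

theorem Matrix.spectrum_eq_of_det_smul_one_sub_eq_prod (A : Matrix n n K) (l : List K)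
    (h : ∀ τ : K, (τ • (1 : Matrix n n K) - A).det = (l.map (τ - ·)).prod) :
    spectrum K A = {x | x ∈ l} := by
  ext τ
  simp [mem_spectrum_iff_det_smul_one_sub_eq_zero, h, List.prod_eq_zero_iff, sub_eq_zero]

end

section

variable {R : Type*} [CommRing R]

theorem Matrix.det_fin_five_of_blockTriangular (a b c d e f g h i j k l m n o p : R) :
    !![a, b, c, d, e;
       f, g, h, i, j;
       0, 0, k, 0, 0;
       0, 0, l, m, 0;
       0, 0, n, o, p].det = (a * g - b * f) * k * m * p := by
  simp [det_succ_column_zero, Fin.sum_univ_succ, Fin.succAbove]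
  ring

theorem Matrix.det_smul_one_sub_fin_five_of_blockTriangular
    (a b c d e f g h i j k l m n o p τ : R) :
    (τ • (1 : Matrix (Fin 5) (Fin 5) R) -
      !![a, b, c, d, e;
         f, g, h, i, j;
         0, 0, k, 0, 0;
         0, 0, l, m, 0;
         0, 0, n, o, p]).det =
      ((τ - a) * (τ - g) - b * f) * (τ - k) * (τ - m) * (τ - p) := by
  have hsub : τ • (1 : Matrix (Fin 5) (Fin 5) R) -
      !![a, b, c, d, e; f, g, h, i, j; 0, 0, k, 0, 0; 0, 0, l, m, 0; 0, 0, n, o, p] =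
      !![τ - a, -b, -c, -d, -e; -f, τ - g, -h, -i, -j; 0, 0, τ - k, 0, 0;
         0, 0, -l, τ - m, 0; 0, 0, -n, -o, τ - p] := by
    ext r s
    fin_cases r <;> fin_cases s <;> simp
  rw [hsub, det_fin_five_of_blockTriangular]
  ring

end

/-- Here `κ` stands for the removal rate of the infected class, `ω + ω₁ + m + r₁` or
`ω + ω₂ + r₂`. -/
theorem transmission_at_dfe_eq_rate_mul_reproductionNumber {B ω α μ σ β κ : ℝ}
    (hω : ω ≠ 0) (hN : μ + ω + α ≠ 0) (hκ : κ ≠ 0) :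
    β * (B * (μ + ω) / (ω * (μ + ω + α)) + (1 - σ) * (α * B / (ω * (μ + ω + α)))) =
      κ * (β * (B * (μ + ω) + (1 - σ) * α * B) / (κ * ω * (μ + ω + α))) := by
  field_simp

theorem dfe_jacobian_charpoly_general
    (B ω β₁ β₂ α μ δ σ ω₁ ω₂ m r₁ r₂ : ℝ)
    (hω : 0 < ω) (hα : 0 < α)
    (hμ : 0 < μ)
    (hω₁ : 0 < ω₁) (hω₂ : 0 < ω₂) (hm : 0 < m) (hr₁ : 0 < r₁) (hr₂ : 0 < r₂)
    (S₀ V₀ R₀₁ R₀₂ : ℝ)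
    (hS₀ : S₀ = B * (μ + ω) / (ω * (μ + ω + α)))
    (hV₀ : V₀ = α * B / (ω * (μ + ω + α)))
    (hR₀₁ : R₀₁ = β₁ * (B * (μ + ω) + (1 - σ) * α * B) /
      ((ω + ω₁ + m + r₁) * ω * (μ + ω + α)))
    (hR₀₂ : R₀₂ = β₂ * (B * (μ + ω) + (1 - σ) * α * B) /
      ((ω + ω₂ + r₂) * ω * (μ + ω + α)))
    (J₀ : Matrix (Fin 5) (Fin 5) ℝ)
    (hJ₀ : J₀ =
      !![-ω - α, μ, -β₁ * S₀, -β₂ * S₀, δ;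
         α, -ω - μ, -(1 - σ) * β₁ * V₀, -(1 - σ) * β₂ * V₀, 0;
         0, 0, -(ω + ω₁ + m + r₁) + β₁ * (S₀ + (1 - σ) * V₀), 0, 0;
         0, 0, m, -(ω + ω₂ + r₂) + β₂ * (S₀ + (1 - σ) * V₀), 0;
         0, 0, r₁, r₂, -ω - δ]) :
    (∀ τ : ℝ,
      (τ • (1 : Matrix (Fin 5) (Fin 5) ℝ) - J₀).det =
        (τ + ω) * (τ + ω + α + μ) * (τ + (ω + ω₁ + m + r₁) * (1 - R₀₁)) *
          (τ + (ω + ω₂ + r₂) * (1 - R₀₂)) * (τ + ω + δ)) ∧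
    spectrum ℝ J₀ =
      {-ω, -(ω + α + μ), -((ω + ω₁ + m + r₁) * (1 - R₀₁)),
        -((ω + ω₂ + r₂) * (1 - R₀₂)), -(ω + δ)} := by
  have hN : μ + ω + α ≠ 0 := by positivity
  have hI₁ : β₁ * (S₀ + (1 - σ) * V₀) = (ω + ω₁ + m + r₁) * R₀₁ := by
    rw [hS₀, hV₀, hR₀₁]
    exact transmission_at_dfe_eq_rate_mul_reproductionNumber hω.ne' hN (by positivity)
  have hI₂ : β₂ * (S₀ + (1 - σ) * V₀) = (ω + ω₂ + r₂) * R₀₂ := by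
    rw [hS₀, hV₀, hR₀₂]
    exact transmission_at_dfe_eq_rate_mul_reproductionNumber hω.ne' hN (by positivity)
  have hdet : ∀ τ : ℝ, (τ • (1 : Matrix (Fin 5) (Fin 5) ℝ) - J₀).det =
      (τ + ω) * (τ + ω + α + μ) * (τ + (ω + ω₁ + m + r₁) * (1 - R₀₁)) *
        (τ + (ω + ω₂ + r₂) * (1 - R₀₂)) * (τ + ω + δ) := by
    intro τ
    rw [hJ₀, det_smul_one_sub_fin_five_of_blockTriangular, hI₁, hI₂]
    ring
  refine ⟨hdet, ?_⟩
  have hprod : ∀ τ : ℝ, (τ • (1 : Matrix (Fin 5) (Fin 5) ℝ) - J₀).det =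
      ([-ω, -(ω + α + μ), -((ω + ω₁ + m + r₁) * (1 - R₀₁)),
        -((ω + ω₂ + r₂) * (1 - R₀₂)), -(ω + δ)].map (τ - ·)).prod := by
    intro τ
    rw [hdet]
    simp only [List.map_cons, List.map_nil, List.prod_cons, List.prod_nil]
    ring
  rw [spectrum_eq_of_det_smul_one_sub_eq_prod J₀ _ hprod]
  ext x
  simp

/-- The characteristic polynomial of the Jacobian J₀ at the disease-free
equilibrium factors as
det(τI − J₀) = (τ+ω)(τ+ω+α+μ)(τ+(ω+ω₁+m+r₁)(1−R₀₁))(τ+(ω+ω₂+r₂)(1−R₀₂))(τ+ω+δ);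
in particular the eigenvalues of J₀ are −ω, −(ω+α+μ), −(ω+ω₁+m+r₁)(1−R₀₁),
−(ω+ω₂+r₂)(1−R₀₂) and −(ω+δ). -/
theorem dfe_jacobian_charpoly
    (B ω β₁ β₂ α μ δ σ ω₁ ω₂ m r₁ r₂ : ℝ)
    (hB : 0 < B) (hω : 0 < ω) (hβ₁ : 0 < β₁) (hβ₂ : 0 < β₂) (hα : 0 < α)
    (hμ : 0 < μ) (hδ : 0 < δ) (hσ : σ ∈ Set.Ioo (0 : ℝ) 1)
    (hω₁ : 0 < ω₁) (hω₂ : 0 < ω₂) (hm : 0 < m) (hr₁ : 0 < r₁) (hr₂ : 0 < r₂)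
    (S₀ V₀ R₀₁ R₀₂ : ℝ)
    (hS₀ : S₀ = B * (μ + ω) / (ω * (μ + ω + α)))
    (hV₀ : V₀ = α * B / (ω * (μ + ω + α)))
    (hR₀₁ : R₀₁ = β₁ * (B * (μ + ω) + (1 - σ) * α * B) /
      ((ω + ω₁ + m + r₁) * ω * (μ + ω + α)))
    (hR₀₂ : R₀₂ = β₂ * (B * (μ + ω) + (1 - σ) * α * B) /
      ((ω + ω₂ + r₂) * ω * (μ + ω + α)))
    (J₀ : Matrix (Fin 5) (Fin 5) ℝ)
    (hJ₀ : J₀ =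
      !![-ω - α, μ, -β₁ * S₀, -β₂ * S₀, δ;
         α, -ω - μ, -(1 - σ) * β₁ * V₀, -(1 - σ) * β₂ * V₀, 0;
         0, 0, -(ω + ω₁ + m + r₁) + β₁ * (S₀ + (1 - σ) * V₀), 0, 0;
         0, 0, m, -(ω + ω₂ + r₂) + β₂ * (S₀ + (1 - σ) * V₀), 0;
         0, 0, r₁, r₂, -ω - δ]) :
    (∀ τ : ℝ,
      (τ • (1 : Matrix (Fin 5) (Fin 5) ℝ) - J₀).det =
        (τ + ω) * (τ + ω + α + μ) * (τ + (ω + ω₁ + m + r₁) * (1 - R₀₁)) *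
          (τ + (ω + ω₂ + r₂) * (1 - R₀₂)) * (τ + ω + δ)) ∧
    spectrum ℝ J₀ =
      {-ω, -(ω + α + μ), -((ω + ω₁ + m + r₁) * (1 - R₀₁)),
        -((ω + ω₂ + r₂) * (1 - R₀₂)), -(ω + δ)} :=
  dfe_jacobian_charpoly_general B ω β₁ β₂ α μ δ σ ω₁ ω₂ m r₁ r₂ hω hα hμ hω₁ hω₂ hm hr₁ hr₂ S₀ V₀
    R₀₁ R₀₂ hS₀ hV₀ hR₀₁ hR₀₂ J₀ hJ₀
end

section
/- (Theorem 3.1, spectral form) If R₀₁ < 1 and R₀₂ < 1, then every complex eigenvalue τ of the Jacobian J₀ at the disease-free equilibrium satisfies Re(τ) < 0. -/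
/-!
Ordering the compartments as (I₁, I₂, R, S, V), the Jacobian at the disease-free equilibrium is
block lower triangular, so its characteristic polynomial is the product of the `(S, V)`-block's
quadratic `X² + (2ω + α + μ) X + ω (ω + μ + α)` and the three linear factors coming from the diagonal
entries of the infected and recovered rows. The quadratic has positive coefficients, hence roots in
the open left half-plane; `R₀ᵢ < 1` says exactly that the `Iᵢ`-diagonal entry is negative, and the
`R`-diagonal entry is `-ω - δ < 0`.
-/

open Matrix Polynomial

lemma Complex.re_neg_of_sq_add_mul_add_eq_zero {c d : ℝ} (hc : 0 < c) (hd : 0 < d) {τ : ℂ}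
    (h : τ ^ 2 + c * τ + d = 0) : τ.re < 0 := by
  have hre := congrArg Complex.re h
  have him := congrArg Complex.im h
  simp only [sq, Complex.add_re, Complex.mul_re, Complex.ofReal_re, Complex.ofReal_im,
    Complex.add_im, Complex.mul_im, Complex.zero_re, Complex.zero_im] at hre him
  rcases mul_eq_zero.mp (show τ.im * (2 * τ.re + c) = 0 by linarith) with him0 | hsum
  · rw [him0] at hre
    nlinarith
  · linarith

lemma Matrix.charpoly_fin_five_of_zero_pattern {R : Type*} [CommRing R]
    (a₀₀ a₀₁ a₀₂ a₀₃ a₀₄ a₁₀ a₁₁ a₁₂ a₁₃ a₂₂ a₃₂ a₃₃ a₄₂ a₄₃ a₄₄ : R) :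
    (!![a₀₀, a₀₁, a₀₂, a₀₃, a₀₄;
        a₁₀, a₁₁, a₁₂, a₁₃, 0;
        0, 0, a₂₂, 0, 0;
        0, 0, a₃₂, a₃₃, 0;
        0, 0, a₄₂, a₄₃, a₄₄] : Matrix (Fin 5) (Fin 5) R).charpoly =
      (X ^ 2 - C (a₀₀ + a₁₁) * X + C (a₀₀ * a₁₁ - a₀₁ * a₁₀)) *
        (X - C a₂₂) * (X - C a₃₃) * (X - C a₄₄) := by
  rw [charpoly, det_succ_column_zero]
  simp [Fin.sum_univ_succ, det_succ_column_zero, charmatrix_apply, Fin.succAbove]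
  ring

lemma Matrix.re_neg_of_mem_spectrum_fin_five_of_zero_pattern
    {a₀₀ a₀₁ a₀₂ a₀₃ a₀₄ a₁₀ a₁₁ a₁₂ a₁₃ a₂₂ a₃₂ a₃₃ a₄₂ a₄₃ a₄₄ : ℝ}
    (htrace : a₀₀ + a₁₁ < 0) (hdet : 0 < a₀₀ * a₁₁ - a₀₁ * a₁₀)
    (h₂₂ : a₂₂ < 0) (h₃₃ : a₃₃ < 0) (h₄₄ : a₄₄ < 0) {τ : ℂ}
    (hτ : τ ∈ spectrum ℂ ((!![a₀₀, a₀₁, a₀₂, a₀₃, a₀₄;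
        a₁₀, a₁₁, a₁₂, a₁₃, 0;
        0, 0, a₂₂, 0, 0;
        0, 0, a₃₂, a₃₃, 0;
        0, 0, a₄₂, a₄₃, a₄₄] : Matrix (Fin 5) (Fin 5) ℝ).map (Complex.ofReal ·))) :
    τ.re < 0 := by
  simp only [← Complex.ofRealHom_eq_coe] at hτ
  rw [mem_spectrum_iff_isRoot_charpoly, charpoly_map, charpoly_fin_five_of_zero_pattern,
    IsRoot.def] at hτ
  simp only [Polynomial.map_mul, Polynomial.map_sub, Polynomial.map_add, Polynomial.map_pow,
    map_X, map_C, eval_mul, eval_sub, eval_add, eval_pow, eval_X, eval_C,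
    Complex.ofRealHom_eq_coe, mul_eq_zero, sub_eq_zero] at hτ
  rcases hτ with ((hquad | rfl) | rfl) | rfl
  · refine Complex.re_neg_of_sq_add_mul_add_eq_zero (neg_pos.mpr htrace) hdet ?_
    push_cast at hquad ⊢
    linear_combination hquad
  all_goals simpa

theorem dfe_locally_asymptotically_stable_general
    (B ω β₁ β₂ α μ δ σ ω₁ ω₂ m r₁ r₂ : ℝ)
    (hω : 0 < ω) (hα : 0 < α)
    (hμ : 0 < μ) (hδ : 0 < δ)
    (hω₁ : 0 < ω₁) (hω₂ : 0 < ω₂) (hm : 0 < m) (hr₁ : 0 < r₁) (hr₂ : 0 < r₂)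
    (S₀ V₀ R₀₁ R₀₂ : ℝ)
    (hS₀ : S₀ = B * (μ + ω) / (ω * (μ + ω + α)))
    (hV₀ : V₀ = α * B / (ω * (μ + ω + α)))
    (hR₀₁ : R₀₁ = β₁ * (B * (μ + ω) + (1 - σ) * α * B) /
      ((ω + ω₁ + m + r₁) * ω * (μ + ω + α)))
    (hR₀₂ : R₀₂ = β₂ * (B * (μ + ω) + (1 - σ) * α * B) /
      ((ω + ω₂ + r₂) * ω * (μ + ω + α)))
    (hlt₁ : R₀₁ < 1) (hlt₂ : R₀₂ < 1)
    (J₀ : Matrix (Fin 5) (Fin 5) ℝ)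
    (hJ₀ : J₀ =
      !![-ω - α, μ, -β₁ * S₀, -β₂ * S₀, δ;
         α, -ω - μ, -(1 - σ) * β₁ * V₀, -(1 - σ) * β₂ * V₀, 0;
         0, 0, -(ω + ω₁ + m + r₁) + β₁ * (S₀ + (1 - σ) * V₀), 0, 0;
         0, 0, m, -(ω + ω₂ + r₂) + β₂ * (S₀ + (1 - σ) * V₀), 0;
         0, 0, r₁, r₂, -ω - δ]) :
    ∀ τ : ℂ, τ ∈ spectrum ℂ (J₀.map (Complex.ofReal ·)) → τ.re < 0 := by
  intro τ hτ
  have hR₀₁' : R₀₁ = β₁ * (S₀ + (1 - σ) * V₀) / (ω + ω₁ + m + r₁) := by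
    rw [hR₀₁, hS₀, hV₀]
    field_simp
  have hR₀₂' : R₀₂ = β₂ * (S₀ + (1 - σ) * V₀) / (ω + ω₂ + r₂) := by
    rw [hR₀₂, hS₀, hV₀]
    field_simp
  have hI₁ := (div_lt_one (by positivity)).mp (hR₀₁' ▸ hlt₁)
  have hI₂ := (div_lt_one (by positivity)).mp (hR₀₂' ▸ hlt₂)
  subst hJ₀
  exact re_neg_of_mem_spectrum_fin_five_of_zero_pattern (by linarith)
    (by linarith [mul_pos hω hω, mul_pos hω hμ, mul_pos hω hα]) (by linarith) (by linarith)
    (by linarith) hτ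

/-- Theorem 3.1 (spectral form): if R₀₁ < 1 and R₀₂ < 1 then every complex
eigenvalue τ of the Jacobian J₀ at the disease-free equilibrium satisfies
Re(τ) < 0. -/
theorem dfe_locally_asymptotically_stable
    (B ω β₁ β₂ α μ δ σ ω₁ ω₂ m r₁ r₂ : ℝ)
    (hB : 0 < B) (hω : 0 < ω) (hβ₁ : 0 < β₁) (hβ₂ : 0 < β₂) (hα : 0 < α)
    (hμ : 0 < μ) (hδ : 0 < δ) (hσ : σ ∈ Set.Ioo (0 : ℝ) 1)
    (hω₁ : 0 < ω₁) (hω₂ : 0 < ω₂) (hm : 0 < m) (hr₁ : 0 < r₁) (hr₂ : 0 < r₂)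
    (S₀ V₀ R₀₁ R₀₂ : ℝ)
    (hS₀ : S₀ = B * (μ + ω) / (ω * (μ + ω + α)))
    (hV₀ : V₀ = α * B / (ω * (μ + ω + α)))
    (hR₀₁ : R₀₁ = β₁ * (B * (μ + ω) + (1 - σ) * α * B) /
      ((ω + ω₁ + m + r₁) * ω * (μ + ω + α)))
    (hR₀₂ : R₀₂ = β₂ * (B * (μ + ω) + (1 - σ) * α * B) /
      ((ω + ω₂ + r₂) * ω * (μ + ω + α)))
    (hlt₁ : R₀₁ < 1) (hlt₂ : R₀₂ < 1)
    (J₀ : Matrix (Fin 5) (Fin 5) ℝ)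
    (hJ₀ : J₀ =
      !![-ω - α, μ, -β₁ * S₀, -β₂ * S₀, δ;
         α, -ω - μ, -(1 - σ) * β₁ * V₀, -(1 - σ) * β₂ * V₀, 0;
         0, 0, -(ω + ω₁ + m + r₁) + β₁ * (S₀ + (1 - σ) * V₀), 0, 0;
         0, 0, m, -(ω + ω₂ + r₂) + β₂ * (S₀ + (1 - σ) * V₀), 0;
         0, 0, r₁, r₂, -ω - δ]) :
    ∀ τ : ℂ, τ ∈ spectrum ℂ (J₀.map (Complex.ofReal ·)) → τ.re < 0 :=
  dfe_locally_asymptotically_stable_general B ω β₁ β₂ α μ δ σ ω₁ ω₂ m r₁ r₂ hω hα hμ hδ hω₁ hω₂ hm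
    hr₁ hr₂ S₀ V₀ R₀₁ R₀₂ hS₀ hV₀ hR₀₁ hR₀₂ hlt₁ hlt₂ J₀ hJ₀
end

section
/- (Lyapunov descent at the disease-free equilibrium, core of Theorem 4.1) Assume R₀₁ < 1 and R₀₂ < 1, and set C₁ = 1/(ω+ω₁+m+r₁) − mω(μ+ω+α)/((ω+ω₂+r₂)[−(ω+ω₁+m+r₁)ω(μ+ω+α)+β₁B(μ+ω)+(1−σ)β₁αB]) and C₂ = 1/(ω+ω₂+r₂). Then C₁ > 0 and C₂ > 0, and for all S, V, I₁, I₂ ≥ 0 with S + (1−σ)V ≤ S₀ + (1−σ)V₀ one has C₁·[−(ω+ω₁+m+r₁)I₁ + β₁(S+(1−σ)V)I₁] + C₂·[−(ω+ω₂+r₂)I₂ + mI₁ + β₂(S+(1−σ)V)I₂] ≤ (R₀₁−1)I₁ + (R₀₂−1)I₂ ≤ 0. -/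
/-!
Write `k₁ = ω+ω₁+m+r₁`, `k₂ = ω+ω₂+r₂` and `X = S + (1-σ)V`, so that `β₁ X* = k₁ R₀₁` and
`β₂ X* = k₂ R₀₂` at `X* = S₀ + (1-σ)V₀`. The derivative of `L₀` is linear in `I₁, I₂`, with
coefficients `C₁(β₁X - k₁) + C₂m` and `C₂(β₂X - k₂)` that are nondecreasing in `X`; so on
`X ≤ X*` they are bounded by their values at `X*`. With `C₂ = 1/k₂` the second one is
`R₀₂ - 1` there, and `C₁ = (1 + m/(k₂(1-R₀₁)))/k₁` is the weight that makes the first one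
`R₀₁ - 1`, the transfer `m I₁` into the second strain being absorbed.
-/

noncomputable def lyapunovWeight (k₁ k₂ m R : ℝ) : ℝ :=
  (1 + m / (k₂ * (1 - R))) / k₁

section TwoStrain

variable {k₁ k₂ m R₁ R₂ β₁ β₂ X Xs I₁ I₂ : ℝ}

lemma lyapunovWeight_pos (hk₁ : 0 < k₁) (hk₂ : 0 < k₂) (hm : 0 ≤ m) (hR : R₁ < 1) :
    0 < lyapunovWeight k₁ k₂ m R₁ := by
  have : 0 < 1 - R₁ := sub_pos.mpr hR
  unfold lyapunovWeight
  positivity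

lemma lyapunovWeight_mul_add_eq (hk₁ : k₁ ≠ 0) (hk₂ : k₂ ≠ 0) (hR : R₁ ≠ 1) :
    lyapunovWeight k₁ k₂ m R₁ * (k₁ * (R₁ - 1)) + m / k₂ = R₁ - 1 := by
  have : 1 - R₁ ≠ 0 := sub_ne_zero.mpr hR.symm
  unfold lyapunovWeight
  field_simp
  ring

lemma lyapunov_deriv_le (hk₁ : 0 < k₁) (hk₂ : 0 < k₂) (hm : 0 ≤ m)
    (hβ₁ : 0 ≤ β₁) (hβ₂ : 0 ≤ β₂) (hR₁ : β₁ * Xs = k₁ * R₁) (hR₂ : β₂ * Xs = k₂ * R₂)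
    (hR₁lt : R₁ < 1) (hX : X ≤ Xs) (hI₁ : 0 ≤ I₁) (hI₂ : 0 ≤ I₂) :
    lyapunovWeight k₁ k₂ m R₁ * (-k₁ * I₁ + β₁ * X * I₁) +
        1 / k₂ * (-k₂ * I₂ + m * I₁ + β₂ * X * I₂)
      ≤ (R₁ - 1) * I₁ + (R₂ - 1) * I₂ := by
  set C₁ := lyapunovWeight k₁ k₂ m R₁
  have hC₁ : 0 < C₁ := lyapunovWeight_pos hk₁ hk₂ hm hR₁lt
  have coeff₁ : C₁ * (-k₁ + β₁ * X) + m / k₂ ≤ R₁ - 1 := calc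
    C₁ * (-k₁ + β₁ * X) + m / k₂ ≤ C₁ * (-k₁ + β₁ * Xs) + m / k₂ := by gcongr
    _ = R₁ - 1 := by
      rw [hR₁, ← lyapunovWeight_mul_add_eq hk₁.ne' hk₂.ne' hR₁lt.ne]
      ring
  have coeff₂ : 1 / k₂ * (-k₂ + β₂ * X) ≤ R₂ - 1 := calc
    1 / k₂ * (-k₂ + β₂ * X) ≤ 1 / k₂ * (-k₂ + β₂ * Xs) := by gcongr
    _ = R₂ - 1 := by
      rw [hR₂]
      field_simp
      ring
  calc C₁ * (-k₁ * I₁ + β₁ * X * I₁) + 1 / k₂ * (-k₂ * I₂ + m * I₁ + β₂ * X * I₂)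
      = (C₁ * (-k₁ + β₁ * X) + m / k₂) * I₁ + 1 / k₂ * (-k₂ + β₂ * X) * I₂ := by ring
    _ ≤ (R₁ - 1) * I₁ + (R₂ - 1) * I₂ := by gcongr

end TwoStrain

theorem lyapunov_descent_dfe_general
    (B ω β₁ β₂ α μ σ ω₁ ω₂ m r₁ r₂ : ℝ)
    (hω : 0 < ω) (hβ₁ : 0 < β₁) (hβ₂ : 0 < β₂) (hα : 0 < α)
    (hμ : 0 < μ)
    (hω₁ : 0 < ω₁) (hω₂ : 0 < ω₂) (hm : 0 < m) (hr₁ : 0 < r₁) (hr₂ : 0 < r₂)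
    (S₀ V₀ R₀₁ R₀₂ C₁ C₂ : ℝ)
    (hS₀ : S₀ = B * (μ + ω) / (ω * (μ + ω + α)))
    (hV₀ : V₀ = α * B / (ω * (μ + ω + α)))
    (hR₀₁ : R₀₁ = β₁ * (B * (μ + ω) + (1 - σ) * α * B) /
      ((ω + ω₁ + m + r₁) * ω * (μ + ω + α)))
    (hR₀₂ : R₀₂ = β₂ * (B * (μ + ω) + (1 - σ) * α * B) /
      ((ω + ω₂ + r₂) * ω * (μ + ω + α)))
    (hlt₁ : R₀₁ < 1) (hlt₂ : R₀₂ < 1)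
    (hC₁ : C₁ = 1 / (ω + ω₁ + m + r₁) -
      m * ω * (μ + ω + α) /
        ((ω + ω₂ + r₂) *
          (-((ω + ω₁ + m + r₁) * ω * (μ + ω + α)) + β₁ * B * (μ + ω) +
            (1 - σ) * β₁ * α * B)))
    (hC₂ : C₂ = 1 / (ω + ω₂ + r₂)) :
    0 < C₁ ∧ 0 < C₂ ∧
    ∀ S V I₁ I₂ : ℝ, 0 ≤ S → 0 ≤ V → 0 ≤ I₁ → 0 ≤ I₂ →
      S + (1 - σ) * V ≤ S₀ + (1 - σ) * V₀ →
      C₁ * (-(ω + ω₁ + m + r₁) * I₁ + β₁ * (S + (1 - σ) * V) * I₁) +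
          C₂ * (-(ω + ω₂ + r₂) * I₂ + m * I₁ + β₂ * (S + (1 - σ) * V) * I₂)
        ≤ (R₀₁ - 1) * I₁ + (R₀₂ - 1) * I₂ ∧
      (R₀₁ - 1) * I₁ + (R₀₂ - 1) * I₂ ≤ 0 := by
  have hk₁ : 0 < ω + ω₁ + m + r₁ := by positivity
  have hk₂ : 0 < ω + ω₂ + r₂ := by positivity
  have hD : ω * (μ + ω + α) ≠ 0 := by positivity
  have hR₁ : β₁ * (S₀ + (1 - σ) * V₀) = (ω + ω₁ + m + r₁) * R₀₁ := by
    rw [hS₀, hV₀, hR₀₁]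
    field_simp
  have hR₂ : β₂ * (S₀ + (1 - σ) * V₀) = (ω + ω₂ + r₂) * R₀₂ := by
    rw [hS₀, hV₀, hR₀₂]
    field_simp
  have hC₁' : C₁ = lyapunovWeight (ω + ω₁ + m + r₁) (ω + ω₂ + r₂) m R₀₁ := by
    have hR : 1 - R₀₁ ≠ 0 := sub_ne_zero.mpr hlt₁.ne'
    have hden : -((ω + ω₁ + m + r₁) * ω * (μ + ω + α)) + β₁ * B * (μ + ω) +
        (1 - σ) * β₁ * α * B = -((ω + ω₁ + m + r₁) * (ω * (μ + ω + α)) * (1 - R₀₁)) := by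
      rw [hR₀₁]
      field_simp
      ring
    rw [hC₁, hden, lyapunovWeight]
    field_simp
    ring
  subst hC₁' hC₂
  refine ⟨lyapunovWeight_pos hk₁ hk₂ hm.le hlt₁, by positivity,
    fun S V I₁ I₂ _ _ hI₁ hI₂ hX => ⟨?_, ?_⟩⟩
  · exact lyapunov_deriv_le hk₁ hk₂ hm.le hβ₁.le hβ₂.le hR₁ hR₂ hlt₁ hX hI₁ hI₂
  · exact add_nonpos (mul_nonpos_of_nonpos_of_nonneg (sub_nonpos.mpr hlt₁.le) hI₁)
      (mul_nonpos_of_nonpos_of_nonneg (sub_nonpos.mpr hlt₂.le) hI₂)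

/-- Lyapunov descent at the disease-free equilibrium (core of Theorem 4.1):
if R₀₁ < 1 and R₀₂ < 1, the coefficients C₁, C₂ of the linear Lyapunov
function L₀ = C₁I₁ + C₂I₂ are positive and its derivative along the vector
field is at most (R₀₁−1)I₁ + (R₀₂−1)I₂ ≤ 0 on the relevant region. -/
theorem lyapunov_descent_dfe
    (B ω β₁ β₂ α μ δ σ ω₁ ω₂ m r₁ r₂ : ℝ)
    (hB : 0 < B) (hω : 0 < ω) (hβ₁ : 0 < β₁) (hβ₂ : 0 < β₂) (hα : 0 < α)
    (hμ : 0 < μ) (hδ : 0 < δ) (hσ : σ ∈ Set.Ioo (0 : ℝ) 1)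
    (hω₁ : 0 < ω₁) (hω₂ : 0 < ω₂) (hm : 0 < m) (hr₁ : 0 < r₁) (hr₂ : 0 < r₂)
    (S₀ V₀ R₀₁ R₀₂ C₁ C₂ : ℝ)
    (hS₀ : S₀ = B * (μ + ω) / (ω * (μ + ω + α)))
    (hV₀ : V₀ = α * B / (ω * (μ + ω + α)))
    (hR₀₁ : R₀₁ = β₁ * (B * (μ + ω) + (1 - σ) * α * B) /
      ((ω + ω₁ + m + r₁) * ω * (μ + ω + α)))
    (hR₀₂ : R₀₂ = β₂ * (B * (μ + ω) + (1 - σ) * α * B) /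
      ((ω + ω₂ + r₂) * ω * (μ + ω + α)))
    (hlt₁ : R₀₁ < 1) (hlt₂ : R₀₂ < 1)
    (hC₁ : C₁ = 1 / (ω + ω₁ + m + r₁) -
      m * ω * (μ + ω + α) /
        ((ω + ω₂ + r₂) *
          (-((ω + ω₁ + m + r₁) * ω * (μ + ω + α)) + β₁ * B * (μ + ω) +
            (1 - σ) * β₁ * α * B)))
    (hC₂ : C₂ = 1 / (ω + ω₂ + r₂)) :
    0 < C₁ ∧ 0 < C₂ ∧
    ∀ S V I₁ I₂ : ℝ, 0 ≤ S → 0 ≤ V → 0 ≤ I₁ → 0 ≤ I₂ →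
      S + (1 - σ) * V ≤ S₀ + (1 - σ) * V₀ →
      C₁ * (-(ω + ω₁ + m + r₁) * I₁ + β₁ * (S + (1 - σ) * V) * I₁) +
          C₂ * (-(ω + ω₂ + r₂) * I₂ + m * I₁ + β₂ * (S + (1 - σ) * V) * I₂)
        ≤ (R₀₁ - 1) * I₁ + (R₀₂ - 1) * I₂ ∧
      (R₀₁ - 1) * I₁ + (R₀₂ - 1) * I₂ ≤ 0 :=
  lyapunov_descent_dfe_general B ω β₁ β₂ α μ σ ω₁ ω₂ m r₁ r₂ hω hβ₁ hβ₂ hα hμ hω₁ hω₂ hm hr₁ hr₂ S₀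
    V₀ R₀₁ R₀₂ C₁ C₂ hS₀ hV₀ hR₀₁ hR₀₂ hlt₁ hlt₂ hC₁ hC₂
end

section
/- Let J(E₀,β₁*) denote the Jacobian J₀ of the model at the disease-free equilibrium with the parameter β₁ replaced by β₁* = ω(ω+ω₁+m+r₁)(μ+ω+α)/(B(μ+ω)+(1−σ)αB). Then det(τI − J(E₀,β₁*)) = τ·(τ+ω)(τ+ω+α+μ)(τ+(ω+ω₂+r₂)(1−R₀₂))(τ+ω+δ); consequently 0 is an eigenvalue of J(E₀,β₁*), it is a simple eigenvalue whenever R₀₂ ≠ 1, and if R₀₂ < 1 all remaining eigenvalues are negative reals. -/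
/-!
At `β₁ = β₁*` the `I₁`-diagonal entry of the Jacobian vanishes, since
`β₁* (S₀ + (1 - σ) V₀) = ω + ω₁ + m + r₁`, and the `I₂`-diagonal entry becomes
`-(ω + ω₂ + r₂)(1 - R₀₂)`. Ordering the variables as `I₁, I₂, R, (S, V)` makes the Jacobian block
lower triangular, so its characteristic polynomial is the product of `τ`, `τ + (ω + ω₂ + r₂)(1 - R₀₂)`,
`τ + ω + δ` and the characteristic polynomial `(τ + ω)(τ + ω + α + μ)` of the `(S, V)` block.
All eigenvalues are therefore explicit reals, negative apart from `0` when `R₀₂ < 1`.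
-/

open Matrix Polynomial

theorem Matrix.det_fin_five_of_blockTriangular_s10 {R : Type*} [CommRing R]
    (a b c d p₁ p₂ p₃ q₁ q₂ q₃ x y z u v w : R) :
    !![a, b, p₁, p₂, p₃;
       c, d, q₁, q₂, q₃;
       0, 0, x, 0, 0;
       0, 0, y, z, 0;
       0, 0, u, v, w].det = (a * d - b * c) * x * z * w := by
  eval_det
  ring

theorem Matrix.det_smul_one_sub_fin_five_of_blockTriangular_s10 {R : Type*} [CommRing R]
    (τ a b c d p₁ p₂ p₃ q₁ q₂ q₃ x y z u v w : R) :
    (τ • (1 : Matrix (Fin 5) (Fin 5) R) -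
      !![a, b, p₁, p₂, p₃;
         c, d, q₁, q₂, q₃;
         0, 0, x, 0, 0;
         0, 0, y, z, 0;
         0, 0, u, v, w]).det =
      ((τ - a) * (τ - d) - b * c) * (τ - x) * (τ - z) * (τ - w) := by
  have hsub : τ • (1 : Matrix (Fin 5) (Fin 5) R) -
      !![a, b, p₁, p₂, p₃;
         c, d, q₁, q₂, q₃;
         0, 0, x, 0, 0;
         0, 0, y, z, 0;
         0, 0, u, v, w] =
      !![τ - a, -b, -p₁, -p₂, -p₃;
         -c, τ - d, -q₁, -q₂, -q₃;
         0, 0, τ - x, 0, 0;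
         0, 0, -y, τ - z, 0;
         0, 0, -u, -v, τ - w] := by
    ext i j
    fin_cases i <;> fin_cases j <;> simp
  rw [hsub, det_fin_five_of_blockTriangular_s10]
  ring

theorem Matrix.charpoly_eq_of_det_smul_one_sub {n R : Type*} [Fintype n] [DecidableEq n]
    [CommRing R] [IsDomain R] [Infinite R] {A : Matrix n n R} {p : R[X]}
    (h : ∀ τ : R, (τ • (1 : Matrix n n R) - A).det = p.eval τ) : A.charpoly = p :=
  Polynomial.funext fun τ => by rw [eval_charpoly, ← h, smul_one_eq_diagonal]; rfl

theorem Matrix.mem_spectrum_map_iff_of_charpoly_eq_prod {n K L : Type*} [Fintype n]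
    [DecidableEq n] [CommRing K] [Field L] (f : K →+* L) {A : Matrix n n K} {s : Multiset K}
    (h : A.charpoly = (s.map fun a => X - C a).prod) (μ : L) :
    μ ∈ spectrum L (A.map f) ↔ μ ∈ s.map f := by
  have hf : (A.map f).charpoly = ((s.map f).map fun a => X - C a).prod := by
    rw [charpoly_map, h, Polynomial.map_multiset_prod, Multiset.map_map, Multiset.map_map]
    simp only [Function.comp_apply, Polynomial.map_sub, map_X, map_C]
  rw [mem_spectrum_iff_isRoot_charpoly, hf,
    ← mem_roots (monic_multiset_prod_of_monic _ _ fun a _ => monic_X_sub_C a).ne_zero,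
    roots_multiset_prod_X_sub_C]

theorem Matrix.count_zero_roots_charpoly_of_eq_prod {n K : Type*} [Fintype n] [DecidableEq n]
    [CommRing K] [IsDomain K] [DecidableEq K] {A : Matrix n n K} {s : Multiset K}
    (h : A.charpoly = ((0 ::ₘ s).map fun a => X - C a).prod) (hs : 0 ∉ s) :
    A.charpoly.roots.count 0 = 1 := by
  rw [h, roots_multiset_prod_X_sub_C, Multiset.count_cons_self, Multiset.count_eq_zero.2 hs]

theorem Matrix.im_eq_zero_and_re_neg_of_mem_spectrum {n : Type*} [Fintype n] [DecidableEq n]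
    {A : Matrix n n ℝ} {s : Multiset ℝ}
    (h : A.charpoly = ((0 ::ₘ s).map fun a => X - C a).prod) (hs : ∀ a ∈ s, a < 0) {τ : ℂ}
    (hτ : τ ∈ spectrum ℂ (A.map (Complex.ofReal ·))) (hτ0 : τ ≠ 0) : τ.im = 0 ∧ τ.re < 0 := by
  obtain ⟨x, hx, rfl⟩ := Multiset.mem_map.1
    ((mem_spectrum_map_iff_of_charpoly_eq_prod Complex.ofRealHom h τ).1 hτ)
  rcases Multiset.mem_cons.1 hx with rfl | hx
  · exact absurd (map_zero _) hτ0
  · exact ⟨Complex.ofReal_im x, hs x hx⟩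

theorem jacobian_beta1star_zero_eigenvalue_general
    (B ω β₂ α μ δ σ ω₁ ω₂ m r₁ r₂ : ℝ)
    (hB : 0 < B) (hω : 0 < ω) (hα : 0 < α)
    (hμ : 0 < μ) (hδ : 0 < δ) (hσ : σ ∈ Set.Ioo (0 : ℝ) 1)
    (hω₂ : 0 < ω₂) (hr₂ : 0 < r₂)
    (S₀ V₀ R₀₂ β₁star : ℝ)
    (hS₀ : S₀ = B * (μ + ω) / (ω * (μ + ω + α)))
    (hV₀ : V₀ = α * B / (ω * (μ + ω + α)))
    (hR₀₂ : R₀₂ = β₂ * (B * (μ + ω) + (1 - σ) * α * B) /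
      ((ω + ω₂ + r₂) * ω * (μ + ω + α)))
    (hβ₁star : β₁star = ω * (ω + ω₁ + m + r₁) * (μ + ω + α) /
      (B * (μ + ω) + (1 - σ) * α * B))
    (J : Matrix (Fin 5) (Fin 5) ℝ)
    (hJ : J =
      !![-ω - α, μ, -β₁star * S₀, -β₂ * S₀, δ;
         α, -ω - μ, -(1 - σ) * β₁star * V₀, -(1 - σ) * β₂ * V₀, 0;
         0, 0, -(ω + ω₁ + m + r₁) + β₁star * (S₀ + (1 - σ) * V₀), 0, 0;
         0, 0, m, -(ω + ω₂ + r₂) + β₂ * (S₀ + (1 - σ) * V₀), 0;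
         0, 0, r₁, r₂, -ω - δ]) :
    (∀ τ : ℝ,
      (τ • (1 : Matrix (Fin 5) (Fin 5) ℝ) - J).det =
        τ * ((τ + ω) * (τ + ω + α + μ) * (τ + (ω + ω₂ + r₂) * (1 - R₀₂)) *
          (τ + ω + δ))) ∧
    (0 : ℝ) ∈ spectrum ℝ J ∧
    (R₀₂ ≠ 1 → (Matrix.charpoly J).roots.count 0 = 1) ∧
    (R₀₂ < 1 → ∀ τ : ℂ, τ ∈ spectrum ℂ (J.map (Complex.ofReal ·)) → τ ≠ 0 →
      τ.im = 0 ∧ τ.re < 0) := by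
  have hN : 0 < B * (μ + ω) + (1 - σ) * α * B := by
    have := sub_pos.2 hσ.2
    positivity
  have hpool : S₀ + (1 - σ) * V₀ = (B * (μ + ω) + (1 - σ) * α * B) / (ω * (μ + ω + α)) := by
    rw [hS₀, hV₀]
    ring
  have hI₁ : β₁star * (S₀ + (1 - σ) * V₀) = ω + ω₁ + m + r₁ := by
    rw [hpool, hβ₁star, div_mul_div_comm, div_eq_iff (mul_pos hN (by positivity)).ne']
    ring
  have hI₂ : β₂ * (S₀ + (1 - σ) * V₀) = (ω + ω₂ + r₂) * R₀₂ := by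
    rw [hpool, hR₀₂]
    field_simp [hN.ne']
  set c := (ω + ω₂ + r₂) * (1 - R₀₂)
  have hdet (τ : ℝ) : (τ • (1 : Matrix (Fin 5) (Fin 5) ℝ) - J).det =
      τ * ((τ + ω) * (τ + ω + α + μ) * (τ + c) * (τ + ω + δ)) := by
    rw [hJ, det_smul_one_sub_fin_five_of_blockTriangular_s10, hI₁, hI₂]
    ring
  have hchar : J.charpoly =
      ((0 ::ₘ {-ω, -(ω + α + μ), -c, -(ω + δ)}).map fun a => X - C a).prod := by
    refine charpoly_eq_of_det_smul_one_sub fun τ => ?_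
    rw [hdet]
    simp only [Multiset.insert_eq_cons, Multiset.map_cons, Multiset.map_singleton,
      Multiset.prod_cons, Multiset.prod_singleton, eval_mul, eval_sub, eval_X, eval_C]
    ring
  refine ⟨hdet, ?_, fun hR => count_zero_roots_charpoly_of_eq_prod hchar ?_,
    fun hR τ => im_eq_zero_and_re_neg_of_mem_spectrum hchar ?_⟩
  · rw [mem_spectrum_iff_isRoot_charpoly, hchar]
    simp
  · have hc0 : c ≠ 0 := mul_ne_zero (by positivity) (sub_ne_zero.2 (Ne.symm hR))
    simp only [Multiset.insert_eq_cons, Multiset.mem_cons, Multiset.mem_singleton, not_or]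
    exact ⟨(neg_ne_zero.2 hω.ne').symm, (neg_ne_zero.2 (by positivity)).symm,
      (neg_ne_zero.2 hc0).symm, (neg_ne_zero.2 (by positivity)).symm⟩
  · have hc0 : 0 < c := mul_pos (by positivity) (sub_pos.2 hR)
    simp only [Multiset.insert_eq_cons, Multiset.mem_cons, Multiset.mem_singleton]
    rintro a (rfl | rfl | rfl | rfl) <;> linarith

/-- The Jacobian at the disease-free equilibrium with β₁ = β₁* has
characteristic polynomial τ(τ+ω)(τ+ω+α+μ)(τ+(ω+ω₂+r₂)(1−R₀₂))(τ+ω+δ):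
0 is an eigenvalue, it is simple whenever R₀₂ ≠ 1, and if R₀₂ < 1
all remaining eigenvalues are negative reals. -/
theorem jacobian_beta1star_zero_eigenvalue
    (B ω β₂ α μ δ σ ω₁ ω₂ m r₁ r₂ : ℝ)
    (hB : 0 < B) (hω : 0 < ω) (hβ₂ : 0 < β₂) (hα : 0 < α)
    (hμ : 0 < μ) (hδ : 0 < δ) (hσ : σ ∈ Set.Ioo (0 : ℝ) 1)
    (hω₁ : 0 < ω₁) (hω₂ : 0 < ω₂) (hm : 0 < m) (hr₁ : 0 < r₁) (hr₂ : 0 < r₂)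
    (S₀ V₀ R₀₂ β₁star : ℝ)
    (hS₀ : S₀ = B * (μ + ω) / (ω * (μ + ω + α)))
    (hV₀ : V₀ = α * B / (ω * (μ + ω + α)))
    (hR₀₂ : R₀₂ = β₂ * (B * (μ + ω) + (1 - σ) * α * B) /
      ((ω + ω₂ + r₂) * ω * (μ + ω + α)))
    (hβ₁star : β₁star = ω * (ω + ω₁ + m + r₁) * (μ + ω + α) /
      (B * (μ + ω) + (1 - σ) * α * B))
    (J : Matrix (Fin 5) (Fin 5) ℝ)
    (hJ : J =
      !![-ω - α, μ, -β₁star * S₀, -β₂ * S₀, δ;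
         α, -ω - μ, -(1 - σ) * β₁star * V₀, -(1 - σ) * β₂ * V₀, 0;
         0, 0, -(ω + ω₁ + m + r₁) + β₁star * (S₀ + (1 - σ) * V₀), 0, 0;
         0, 0, m, -(ω + ω₂ + r₂) + β₂ * (S₀ + (1 - σ) * V₀), 0;
         0, 0, r₁, r₂, -ω - δ]) :
    (∀ τ : ℝ,
      (τ • (1 : Matrix (Fin 5) (Fin 5) ℝ) - J).det =
        τ * ((τ + ω) * (τ + ω + α + μ) * (τ + (ω + ω₂ + r₂) * (1 - R₀₂)) *
          (τ + ω + δ))) ∧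
    (0 : ℝ) ∈ spectrum ℝ J ∧
    (R₀₂ ≠ 1 → (Matrix.charpoly J).roots.count 0 = 1) ∧
    (R₀₂ < 1 → ∀ τ : ℂ, τ ∈ spectrum ℂ (J.map (Complex.ofReal ·)) → τ ≠ 0 →
      τ.im = 0 ∧ τ.re < 0) :=
  jacobian_beta1star_zero_eigenvalue_general B ω β₂ α μ δ σ ω₁ ω₂ m r₁ r₂ hB hω hα hμ hδ hσ hω₂ hr₂
    S₀ V₀ R₀₂ β₁star hS₀ hV₀ hR₀₂ hβ₁star J hJ
end

section
/- Assume R₀₂ ≠ 1 and let J(E₀,β₁*) denote the Jacobian J₀ at the disease-free equilibrium with β₁ replaced by β₁* = ω(ω+ω₁+m+r₁)(μ+ω+α)/(B(μ+ω)+(1−σ)αB). Set A₁ = ω(μ+ω+α)(ω+ω₂+r₂). Then the kernel of J(E₀,β₁*) is one-dimensional, and there is a unique vector w = (w₁,w₂,w₃,w₄,w₅) in this kernel with fourth component w₄ = ω(μ+ω+α); this vector satisfies w₃ = (1−R₀₂)A₁/m and w₅ = [r₁(1−R₀₂)A₁ + r₂ m ω(μ+ω+α)]/(m(ω+δ)).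 -/
open Matrix

/-- If R₀₂ ≠ 1, the kernel of J(E₀,β₁*) is one-dimensional, and the unique
kernel vector w with fourth component ω(μ+ω+α) satisfies
w₃ = (1−R₀₂)A₁/m and w₅ = (r₁(1−R₀₂)A₁ + r₂mω(μ+ω+α))/(m(ω+δ)),
where A₁ = ω(μ+ω+α)(ω+ω₂+r₂). -/
theorem right_eigenvector_beta1star
    (B ω β₂ α μ δ σ ω₁ ω₂ m r₁ r₂ : ℝ)
    (hB : 0 < B) (hω : 0 < ω) (hβ₂ : 0 < β₂) (hα : 0 < α)
    (hμ : 0 < μ) (hδ : 0 < δ) (hσ : σ ∈ Set.Ioo (0 : ℝ) 1)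
    (hω₁ : 0 < ω₁) (hω₂ : 0 < ω₂) (hm : 0 < m) (hr₁ : 0 < r₁) (hr₂ : 0 < r₂)
    (S₀ V₀ R₀₂ β₁star A₁ : ℝ)
    (hS₀ : S₀ = B * (μ + ω) / (ω * (μ + ω + α)))
    (hV₀ : V₀ = α * B / (ω * (μ + ω + α)))
    (hR₀₂ : R₀₂ = β₂ * (B * (μ + ω) + (1 - σ) * α * B) /
      ((ω + ω₂ + r₂) * ω * (μ + ω + α)))
    (hR₀₂ne : R₀₂ ≠ 1)
    (hβ₁star : β₁star = ω * (ω + ω₁ + m + r₁) * (μ + ω + α) /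
      (B * (μ + ω) + (1 - σ) * α * B))
    (hA₁ : A₁ = ω * (μ + ω + α) * (ω + ω₂ + r₂))
    (J : Matrix (Fin 5) (Fin 5) ℝ)
    (hJ : J =
      !![-ω - α, μ, -β₁star * S₀, -β₂ * S₀, δ;
         α, -ω - μ, -(1 - σ) * β₁star * V₀, -(1 - σ) * β₂ * V₀, 0;
         0, 0, -(ω + ω₁ + m + r₁) + β₁star * (S₀ + (1 - σ) * V₀), 0, 0;
         0, 0, m, -(ω + ω₂ + r₂) + β₂ * (S₀ + (1 - σ) * V₀), 0;
         0, 0, r₁, r₂, -ω - δ]) :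
    Module.finrank ℝ (LinearMap.ker (Matrix.toLin' J)) = 1 ∧
    (∃! w : Fin 5 → ℝ, J.mulVec w = 0 ∧ w 3 = ω * (μ + ω + α)) ∧
    (∀ w : Fin 5 → ℝ, J.mulVec w = 0 → w 3 = ω * (μ + ω + α) →
      w 2 = (1 - R₀₂) * A₁ / m ∧
      w 4 = (r₁ * (1 - R₀₂) * A₁ + r₂ * m * ω * (μ + ω + α)) / (m * (ω + δ))) := by
  obtain ⟨hσ0, hσ1⟩ := hσ
  have h1σ : 0 < 1 - σ := by linarith
  have hDen : (0:ℝ) < B * (μ + ω) + (1 - σ) * α * B := by positivity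
  have hμωα : (0:ℝ) < μ + ω + α := by positivity
  have hωμα : (0:ℝ) < ω * (μ + ω + α) := by positivity
  have hω2r : (0:ℝ) < ω + ω₂ + r₂ := by positivity
  have hωδ : (0:ℝ) < ω + δ := by positivity
  -- key entry simplifications
  have hJ22 : -(ω + ω₁ + m + r₁) + β₁star * (S₀ + (1 - σ) * V₀) = 0 := by
    rw [hβ₁star, hS₀, hV₀]
    field_simp
    ring
  have hJ33 : -(ω + ω₂ + r₂) + β₂ * (S₀ + (1 - σ) * V₀) = (R₀₂ - 1) * (ω + ω₂ + r₂) := by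
    rw [hR₀₂, hS₀, hV₀]
    field_simp
    ring
  -- components of the distinguished kernel vector
  obtain ⟨w3v, hw3v⟩ : ∃ x : ℝ, x = ω * (μ + ω + α) := ⟨_, rfl⟩
  obtain ⟨w2v, hw2v⟩ : ∃ x : ℝ, x = (1 - R₀₂) * A₁ / m := ⟨_, rfl⟩
  obtain ⟨w4v, hw4v⟩ : ∃ x : ℝ, x = (r₁ * w2v + r₂ * w3v) / (ω + δ) := ⟨_, rfl⟩
  obtain ⟨c₁, hc₁⟩ : ∃ x : ℝ, x = β₁star * S₀ * w2v + β₂ * S₀ * w3v - δ * w4v := ⟨_, rfl⟩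
  obtain ⟨c₂, hc₂⟩ : ∃ x : ℝ, x = (1 - σ) * β₁star * V₀ * w2v + (1 - σ) * β₂ * V₀ * w3v :=
    ⟨_, rfl⟩
  obtain ⟨w0v, hw0v⟩ : ∃ x : ℝ, x = (-(ω + μ) * c₁ - μ * c₂) / (ω * (μ + ω + α)) := ⟨_, rfl⟩
  obtain ⟨w1v, hw1v⟩ : ∃ x : ℝ, x = (-α * c₁ - (ω + α) * c₂) / (ω * (μ + ω + α)) := ⟨_, rfl⟩
  obtain ⟨wstar, hwstar⟩ : ∃ w : Fin 5 → ℝ, w = ![w0v, w1v, w2v, w3v, w4v] := ⟨_, rfl⟩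
  have hw3ne : w3v ≠ 0 := by rw [hw3v]; exact ne_of_gt hωμα
  have hws3 : wstar 3 = w3v := by rw [hwstar]; rfl
  -- wstar is in the kernel
  have hker : J.mulVec wstar = 0 := by
    have h3 : m * w2v = (1 - R₀₂) * A₁ := by
      rw [hw2v]; field_simp
    have h4 : (ω + δ) * w4v = r₁ * w2v + r₂ * w3v := by
      rw [hw4v]; field_simp
    have h0 : (-ω - α) * w0v + μ * w1v - c₁ = 0 := by
      rw [hw0v, hw1v]
      field_simp
      ring
    have h1 : α * w0v + (-ω - μ) * w1v - c₂ = 0 := by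
      rw [hw0v, hw1v]
      field_simp
      ring
    funext i
    fin_cases i <;>
      simp [hJ, hwstar, Matrix.mulVec, dotProduct, Fin.sum_univ_five, -mul_eq_zero]
    · linear_combination h0 + hc₁
    · linear_combination h1 + hc₂
    · linear_combination w2v * hJ22
    · linear_combination h3 + w3v * hJ33 + (1 - R₀₂) * hA₁
        - (1 - R₀₂) * (ω + ω₂ + r₂) * hw3v
    · linear_combination -h4
  -- any kernel vector with vanishing 4th component is zero
  have hker0 : ∀ u : Fin 5 → ℝ, J.mulVec u = 0 → u 3 = 0 → u = 0 := by
    intro u hu h3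
    have e0 := congrFun hu 0
    have e1 := congrFun hu 1
    have e3 := congrFun hu 3
    have e4 := congrFun hu 4
    simp [hJ, Matrix.mulVec, dotProduct, Fin.sum_univ_five] at e0 e1 e3 e4
    have hu2 : u 2 = 0 := by
      have hm2 : m * u 2 = 0 := by
        linear_combination e3 - (-(ω + ω₂ + r₂) + β₂ * (S₀ + (1 - σ) * V₀)) * h3
      rcases mul_eq_zero.mp hm2 with h | h
      · exact absurd h (ne_of_gt hm)
      · exact h
    have hu4 : u 4 = 0 := by
      have h' : (ω + δ) * u 4 = 0 := by
        linear_combination -e4 + r₁ * hu2 + r₂ * h3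
      rcases mul_eq_zero.mp h' with h | h
      · exact absurd h (ne_of_gt hωδ)
      · exact h
    have e0' : (-ω - α) * u 0 + μ * u 1 = 0 := by
      linear_combination e0 + β₁star * S₀ * hu2 + β₂ * S₀ * h3 - δ * hu4
    have e1' : α * u 0 + (-ω - μ) * u 1 = 0 := by
      linear_combination e1 + (1 - σ) * β₁star * V₀ * hu2 + (1 - σ) * β₂ * V₀ * h3
    have hu0 : u 0 = 0 := by
      have h' : ω * (μ + ω + α) * u 0 = 0 := by
        linear_combination (-(ω + μ)) * e0' - μ * e1'
      rcases mul_eq_zero.mp h' with h | h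
      · exact absurd h (ne_of_gt hωμα)
      · exact h
    have hu1 : u 1 = 0 := by
      have h' : ω * (μ + ω + α) * u 1 = 0 := by
        linear_combination (-α) * e0' - (ω + α) * e1'
      rcases mul_eq_zero.mp h' with h | h
      · exact absurd h (ne_of_gt hωμα)
      · exact h
    funext i
    fin_cases i <;> simp [hu0, hu1, hu2, h3, hu4]
  -- kernel = span of wstar
  have hspan : LinearMap.ker (Matrix.toLin' J) = Submodule.span ℝ {wstar} := by
    apply le_antisymm
    · intro u hu
      rw [LinearMap.mem_ker, Matrix.toLin'_apply] at hu
      have hv : u - (u 3 / w3v) • wstar = 0 := by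
        apply hker0
        · rw [Matrix.mulVec_sub, Matrix.mulVec_smul, hu, hker, smul_zero, sub_zero]
        · simp [hws3, div_mul_cancel₀ _ hw3ne]
      have hu' : u = (u 3 / w3v) • wstar := sub_eq_zero.mp hv
      rw [hu']
      exact Submodule.smul_mem _ _ (Submodule.mem_span_singleton_self _)
    · rw [Submodule.span_singleton_le_iff_mem, LinearMap.mem_ker, Matrix.toLin'_apply]
      exact hker
  have hwstarne : wstar ≠ 0 := by
    intro h
    apply hw3ne
    rw [← hws3, h]
    rfl
  refine ⟨?_, ?_, ?_⟩
  · rw [hspan]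
    exact finrank_span_singleton hwstarne
  · refine ⟨wstar, ⟨hker, by rw [hws3, hw3v]⟩, ?_⟩
    rintro w ⟨hw, hw3⟩
    have hsub : w - wstar = 0 := by
      apply hker0
      · rw [Matrix.mulVec_sub, hw, hker, sub_zero]
      · simp [hws3, hw3, hw3v]
    exact sub_eq_zero.mp hsub
  · intro w hw hw3
    have e3 := congrFun hw 3
    have e4 := congrFun hw 4
    simp [hJ, Matrix.mulVec, dotProduct, Fin.sum_univ_five] at e3 e4
    have hw2' : m * w 2 = (1 - R₀₂) * A₁ := by
      linear_combination e3 - w 3 * hJ33 + (R₀₂ - 1) * hA₁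
        - (R₀₂ - 1) * (ω + ω₂ + r₂) * hw3
    have hw2 : w 2 = (1 - R₀₂) * A₁ / m := by
      rw [eq_div_iff (ne_of_gt hm)]
      linear_combination hw2'
    refine ⟨hw2, ?_⟩
    rw [eq_div_iff (by positivity : m * (ω + δ) ≠ 0)]
    linear_combination (-m) * e4 + r₁ * hw2' + (r₂ * m) * hw3
end

section
/- Let J(E₀,β₂*) denote the Jacobian J₀ of the model at the disease-free equilibrium with the parameter β₂ replaced by β₂* = ω(ω+ω₂+r₂)(μ+ω+α)/(B(μ+ω)+(1−σ)αB). Then det(τI − J(E₀,β₂*)) = τ·(τ+ω)(τ+ω+α+μ)(τ+(ω+ω₁+m+r₁)(1−R₀₁))(τ+ω+δ); consequently 0 is an eigenvalue of J(E₀,β₂*), it is a simple eigenvalue whenever R₀₁ ≠ 1, and if R₀₁ < 1 all remaining eigenvalues are negative reals. -/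
/-!
At the disease-free equilibrium the `I₁`, `I₂` and `R` rows of `J` vanish in the `S`, `V`
columns and form a lower triangular block, so `det (τ - J)` is the characteristic polynomial
`(τ + ω)(τ + ω + α + μ)` of the `(S, V)` block times the three diagonal factors of the
infected block. The `I₁` entry is `-(ω + ω₁ + m + r₁)(1 - R₀₁)`, and `β₂*` is precisely the
value making the `I₂` entry vanish. The characteristic polynomial is then `∏ (X - λ)` over the
explicit real multiset `{0, -ω, -(ω + α + μ), -(ω + ω₁ + m + r₁)(1 - R₀₁), -(ω + δ)}`, from
which the multiplicity of `0` and the signs of the other eigenvalues are read off.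
-/

open Matrix Polynomial

theorem det_smul_one_sub_of_blockTriangular_fin_five {R : Type*} [CommRing R]
    (a b c d e f g h i j k l p q r s t : R) :
    (t • (1 : Matrix (Fin 5) (Fin 5) R) -
        !![a, b, c, d, e; f, g, h, i, j; 0, 0, k, 0, 0; 0, 0, l, p, 0; 0, 0, q, r, s]).det
      = ((t - a) * (t - g) - b * f) * ((t - k) * (t - p) * (t - s)) := by
  simp [det_succ_column_zero, Fin.sum_univ_succ, Fin.succAbove, one_apply]
  ring

namespace Matrix

variable {n : Type*} [Fintype n] [DecidableEq n]

theorem charpoly_eq_of_forall_det_smul_one_sub {R : Type*} [CommRing R] [IsDomain R] [Infinite R]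
    {M : Matrix n n R} {p : R[X]} (h : ∀ t : R, (t • (1 : Matrix n n R) - M).det = p.eval t) :
    M.charpoly = p :=
  Polynomial.funext fun t => by rw [eval_charpoly, scalar_apply, ← smul_one_eq_diagonal, h]

theorem count_zero_roots_charpoly_of_eq_cons {R : Type*} [CommRing R] [IsDomain R]
    [DecidableEq R] {M : Matrix n n R} {s : Multiset R}
    (h : M.charpoly = ((0 ::ₘ s).map fun a => X - C a).prod) (hs : 0 ∉ s) :
    M.charpoly.roots.count 0 = 1 := by
  rw [h, roots_multiset_prod_X_sub_C, Multiset.count_cons_self, Multiset.count_eq_zero.mpr hs]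

theorem exists_eq_ofReal_of_mem_spectrum_map_ofReal {M : Matrix n n ℝ} {s : Multiset ℝ}
    (h : M.charpoly = (s.map fun a => X - C a).prod) {z : ℂ}
    (hz : z ∈ spectrum ℂ (M.map (Complex.ofReal ·))) : ∃ x ∈ s, (x : ℂ) = z := by
  have hroots : (M.map Complex.ofRealHom).charpoly.roots = s.map Complex.ofReal := by
    rw [charpoly_map, h, Polynomial.map_multiset_prod, Multiset.map_map,
      ← roots_multiset_prod_X_sub_C (s.map Complex.ofReal), Multiset.map_map]
    simp
  rw [mem_spectrum_iff_isRoot_charpoly, ← mem_roots (charpoly_monic _).ne_zero] at hz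
  exact Multiset.mem_map.mp (hroots ▸ hz)

theorem im_eq_zero_and_re_neg_of_mem_spectrum_map_ofReal {M : Matrix n n ℝ} {s : Multiset ℝ}
    (h : M.charpoly = ((0 ::ₘ s).map fun a => X - C a).prod) (hs : ∀ x ∈ s, x < 0) {z : ℂ}
    (hz : z ∈ spectrum ℂ (M.map (Complex.ofReal ·))) (hz0 : z ≠ 0) : z.im = 0 ∧ z.re < 0 := by
  obtain ⟨x, hx, rfl⟩ := exists_eq_ofReal_of_mem_spectrum_map_ofReal h hz
  have hx0 : x ≠ 0 := by exact_mod_cast hz0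
  exact ⟨Complex.ofReal_im x, (Complex.ofReal_re x).symm ▸
    hs x ((Multiset.mem_cons.mp hx).resolve_left hx0)⟩

end Matrix

theorem jacobian_beta2star_zero_eigenvalue_general
    (B ω β₁ α μ δ σ ω₁ ω₂ m r₁ r₂ : ℝ)
    (hB : 0 < B) (hω : 0 < ω) (hα : 0 < α)
    (hμ : 0 < μ) (hδ : 0 < δ) (hσ : σ ∈ Set.Ioo (0 : ℝ) 1)
    (hω₁ : 0 < ω₁) (hm : 0 < m) (hr₁ : 0 < r₁)
    (S₀ V₀ R₀₁ β₂star : ℝ)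
    (hS₀ : S₀ = B * (μ + ω) / (ω * (μ + ω + α)))
    (hV₀ : V₀ = α * B / (ω * (μ + ω + α)))
    (hR₀₁ : R₀₁ = β₁ * (B * (μ + ω) + (1 - σ) * α * B) /
      ((ω + ω₁ + m + r₁) * ω * (μ + ω + α)))
    (hβ₂star : β₂star = ω * (ω + ω₂ + r₂) * (μ + ω + α) /
      (B * (μ + ω) + (1 - σ) * α * B))
    (J : Matrix (Fin 5) (Fin 5) ℝ)
    (hJ : J =
      !![-ω - α, μ, -β₁ * S₀, -β₂star * S₀, δ;
         α, -ω - μ, -(1 - σ) * β₁ * V₀, -(1 - σ) * β₂star * V₀, 0;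
         0, 0, -(ω + ω₁ + m + r₁) + β₁ * (S₀ + (1 - σ) * V₀), 0, 0;
         0, 0, m, -(ω + ω₂ + r₂) + β₂star * (S₀ + (1 - σ) * V₀), 0;
         0, 0, r₁, r₂, -ω - δ]) :
    (∀ τ : ℝ,
      (τ • (1 : Matrix (Fin 5) (Fin 5) ℝ) - J).det =
        τ * ((τ + ω) * (τ + ω + α + μ) * (τ + (ω + ω₁ + m + r₁) * (1 - R₀₁)) *
          (τ + ω + δ))) ∧
    (0 : ℝ) ∈ spectrum ℝ J ∧
    (R₀₁ ≠ 1 → (Matrix.charpoly J).roots.count 0 = 1) ∧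
    (R₀₁ < 1 → ∀ τ : ℂ, τ ∈ spectrum ℂ (J.map (Complex.ofReal ·)) → τ ≠ 0 →
      τ.im = 0 ∧ τ.re < 0) := by
  have hN : μ + ω + α * (1 - σ) ≠ 0 := by
    have : 0 < 1 - σ := sub_pos.mpr hσ.2
    positivity
  have hk₁ : 0 < ω + ω₁ + m + r₁ := by positivity
  have hI₁ : β₁ * (S₀ + (1 - σ) * V₀) = (ω + ω₁ + m + r₁) * R₀₁ := by
    rw [hS₀, hV₀, hR₀₁]; field_simp
  have hI₂ : β₂star * (S₀ + (1 - σ) * V₀) = ω + ω₂ + r₂ := by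
    rw [hS₀, hV₀, hβ₂star]; field_simp
  have hdet : ∀ τ : ℝ, (τ • (1 : Matrix (Fin 5) (Fin 5) ℝ) - J).det =
      τ * ((τ + ω) * (τ + ω + α + μ) * (τ + (ω + ω₁ + m + r₁) * (1 - R₀₁)) * (τ + ω + δ)) := by
    intro τ
    rw [hJ, hI₁, hI₂, det_smul_one_sub_of_blockTriangular_fin_five]
    ring
  have hchar : J.charpoly = ((0 ::ₘ {-ω, -(ω + α + μ), -((ω + ω₁ + m + r₁) * (1 - R₀₁)),
      -(ω + δ)}).map fun x => X - C x).prod :=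
    charpoly_eq_of_forall_det_smul_one_sub fun τ => by
      simp only [hdet, Multiset.insert_eq_cons, Multiset.map_cons, Multiset.map_singleton,
        Multiset.prod_cons, Multiset.prod_singleton, eval_mul, eval_sub, eval_X, eval_C]
      ring
  refine ⟨hdet, ?_, fun hR => count_zero_roots_charpoly_of_eq_cons hchar ?_,
    fun hR _ => im_eq_zero_and_re_neg_of_mem_spectrum_map_ofReal hchar ?_⟩
  · rw [mem_spectrum_iff_isRoot_charpoly, hchar]
    simp
  · simp only [Multiset.insert_eq_cons, Multiset.mem_cons, Multiset.mem_singleton, not_or]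
    refine ⟨by linarith, by linarith, ?_, by linarith⟩
    exact (neg_ne_zero.mpr (mul_ne_zero hk₁.ne' (sub_ne_zero.mpr hR.symm))).symm
  · have := mul_pos hk₁ (sub_pos.mpr hR)
    simp only [Multiset.insert_eq_cons, Multiset.mem_cons, Multiset.mem_singleton]
    rintro x (rfl | rfl | rfl | rfl) <;> linarith

/-- The Jacobian at the disease-free equilibrium with β₂ = β₂* has
characteristic polynomial τ(τ+ω)(τ+ω+α+μ)(τ+(ω+ω₁+m+r₁)(1−R₀₁))(τ+ω+δ):
0 is an eigenvalue, it is simple whenever R₀₁ ≠ 1, and if R₀₁ < 1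
all remaining eigenvalues are negative reals. -/
theorem jacobian_beta2star_zero_eigenvalue
    (B ω β₁ α μ δ σ ω₁ ω₂ m r₁ r₂ : ℝ)
    (hB : 0 < B) (hω : 0 < ω) (hβ₁ : 0 < β₁) (hα : 0 < α)
    (hμ : 0 < μ) (hδ : 0 < δ) (hσ : σ ∈ Set.Ioo (0 : ℝ) 1)
    (hω₁ : 0 < ω₁) (hω₂ : 0 < ω₂) (hm : 0 < m) (hr₁ : 0 < r₁) (hr₂ : 0 < r₂)
    (S₀ V₀ R₀₁ β₂star : ℝ)
    (hS₀ : S₀ = B * (μ + ω) / (ω * (μ + ω + α)))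
    (hV₀ : V₀ = α * B / (ω * (μ + ω + α)))
    (hR₀₁ : R₀₁ = β₁ * (B * (μ + ω) + (1 - σ) * α * B) /
      ((ω + ω₁ + m + r₁) * ω * (μ + ω + α)))
    (hβ₂star : β₂star = ω * (ω + ω₂ + r₂) * (μ + ω + α) /
      (B * (μ + ω) + (1 - σ) * α * B))
    (J : Matrix (Fin 5) (Fin 5) ℝ)
    (hJ : J =
      !![-ω - α, μ, -β₁ * S₀, -β₂star * S₀, δ;
         α, -ω - μ, -(1 - σ) * β₁ * V₀, -(1 - σ) * β₂star * V₀, 0;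
         0, 0, -(ω + ω₁ + m + r₁) + β₁ * (S₀ + (1 - σ) * V₀), 0, 0;
         0, 0, m, -(ω + ω₂ + r₂) + β₂star * (S₀ + (1 - σ) * V₀), 0;
         0, 0, r₁, r₂, -ω - δ]) :
    (∀ τ : ℝ,
      (τ • (1 : Matrix (Fin 5) (Fin 5) ℝ) - J).det =
        τ * ((τ + ω) * (τ + ω + α + μ) * (τ + (ω + ω₁ + m + r₁) * (1 - R₀₁)) *
          (τ + ω + δ))) ∧
    (0 : ℝ) ∈ spectrum ℝ J ∧
    (R₀₁ ≠ 1 → (Matrix.charpoly J).roots.count 0 = 1) ∧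
    (R₀₁ < 1 → ∀ τ : ℂ, τ ∈ spectrum ℂ (J.map (Complex.ofReal ·)) → τ ≠ 0 →
      τ.im = 0 ∧ τ.re < 0) :=
  jacobian_beta2star_zero_eigenvalue_general B ω β₁ α μ δ σ ω₁ ω₂ m r₁ r₂ hB hω hα hμ hδ hσ hω₁ hm
    hr₁ S₀ V₀ R₀₁ β₂star hS₀ hV₀ hR₀₁ hβ₂star J hJ
end

section
/- Assume R₀₁ ≠ 1 and let J(E₀,β₂*) denote the Jacobian J₀ at the disease-free equilibrium with β₂ replaced by β₂* = ω(ω+ω₂+r₂)(μ+ω+α)/(B(μ+ω)+(1−σ)αB). Then the kernel of J(E₀,β₂*) is one-dimensional, and there is a unique vector w = (w₁₁,w₂₂,w₃₃,w₄₄,w₅₅) in this kernel with fourth component w₄₄ = 1; this vector satisfies w₃₃ = 0 and w₅₅ = r₂/(ω+δ). -/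
open Matrix

/-- If R₀₁ ≠ 1, the kernel of J(E₀,β₂*) is one-dimensional, and the unique
kernel vector w with fourth component 1 satisfies w₃₃ = 0 and
w₅₅ = r₂/(ω+δ). -/
theorem right_eigenvector_beta2star
    (B ω β₁ α μ δ σ ω₁ ω₂ m r₁ r₂ : ℝ)
    (hB : 0 < B) (hω : 0 < ω) (hβ₁ : 0 < β₁) (hα : 0 < α)
    (hμ : 0 < μ) (hδ : 0 < δ) (hσ : σ ∈ Set.Ioo (0 : ℝ) 1)
    (hω₁ : 0 < ω₁) (hω₂ : 0 < ω₂) (hm : 0 < m) (hr₁ : 0 < r₁) (hr₂ : 0 < r₂)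
    (S₀ V₀ R₀₁ β₂star : ℝ)
    (hS₀ : S₀ = B * (μ + ω) / (ω * (μ + ω + α)))
    (hV₀ : V₀ = α * B / (ω * (μ + ω + α)))
    (hR₀₁ : R₀₁ = β₁ * (B * (μ + ω) + (1 - σ) * α * B) /
      ((ω + ω₁ + m + r₁) * ω * (μ + ω + α)))
    (hR₀₁ne : R₀₁ ≠ 1)
    (hβ₂star : β₂star = ω * (ω + ω₂ + r₂) * (μ + ω + α) /
      (B * (μ + ω) + (1 - σ) * α * B))
    (J : Matrix (Fin 5) (Fin 5) ℝ)
    (hJ : J =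
      !![-ω - α, μ, -β₁ * S₀, -β₂star * S₀, δ;
         α, -ω - μ, -(1 - σ) * β₁ * V₀, -(1 - σ) * β₂star * V₀, 0;
         0, 0, -(ω + ω₁ + m + r₁) + β₁ * (S₀ + (1 - σ) * V₀), 0, 0;
         0, 0, m, -(ω + ω₂ + r₂) + β₂star * (S₀ + (1 - σ) * V₀), 0;
         0, 0, r₁, r₂, -ω - δ]) :
    Module.finrank ℝ (LinearMap.ker (Matrix.toLin' J)) = 1 ∧
    (∃! w : Fin 5 → ℝ, J.mulVec w = 0 ∧ w 3 = 1) ∧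
    (∀ w : Fin 5 → ℝ, J.mulVec w = 0 → w 3 = 1 →
      w 2 = 0 ∧ w 4 = r₂ / (ω + δ)) := by
  obtain ⟨hσ0, hσ1⟩ := hσ
  have hden : (0:ℝ) < ω * (μ + ω + α) := by positivity
  have hnum : (0:ℝ) < B * (μ + ω) + (1 - σ) * α * B := by
    have : (0:ℝ) < 1 - σ := by linarith
    positivity
  have hE : (0:ℝ) < ω + δ := by linarith
  have hD : (0:ℝ) < ω * ω + ω * μ + ω * α := by positivity
  have hDE : (ω * ω + ω * μ + ω * α) * (ω + δ) ≠ 0 := by positivity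
  -- key identity
  have hβT : β₂star * (S₀ + (1 - σ) * V₀) = ω + ω₂ + r₂ := by
    rw [hβ₂star, hS₀, hV₀]
    field_simp
  have ha₃ : -(ω + ω₁ + m + r₁) + β₁ * (S₀ + (1 - σ) * V₀) ≠ 0 := by
    intro h
    apply hR₀₁ne
    rw [hR₀₁]
    rw [hS₀, hV₀] at h
    rw [div_eq_one_iff_eq (by positivity)]
    field_simp at h
    linarith
  set v : Fin 5 → ℝ :=
    ![-((ω + μ) * (β₂star * S₀ * (ω + δ) - δ * r₂) +
        μ * (1 - σ) * β₂star * V₀ * (ω + δ)) / ((ω * ω + ω * μ + ω * α) * (ω + δ)),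
      -((ω + α) * (1 - σ) * β₂star * V₀ * (ω + δ) +
        α * (β₂star * S₀ * (ω + δ) - δ * r₂)) / ((ω * ω + ω * μ + ω * α) * (ω + δ)),
      0, 1, r₂ / (ω + δ)] with hv
  have hv3 : v 3 = 1 := rfl
  have hv2 : v 2 = 0 := rfl
  have hvker : J.mulVec v = 0 := by
    funext i
    fin_cases i
    · simp [hJ, hv, Matrix.mulVec, dotProduct, Fin.sum_univ_five]
      field_simp
      ring
    · simp [hJ, hv, Matrix.mulVec, dotProduct, Fin.sum_univ_five]
      field_simp
      ring
    · simp [hJ, hv, Matrix.mulVec, dotProduct, Fin.sum_univ_five]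
    · simp [hJ, hv, Matrix.mulVec, dotProduct, Fin.sum_univ_five]
      linear_combination hβT
    · simp [hJ, hv, Matrix.mulVec, dotProduct, Fin.sum_univ_five]
      field_simp
      ring
  -- every kernel vector equals w 3 • v
  have key : ∀ w : Fin 5 → ℝ, J.mulVec w = 0 → w = w 3 • v := by
    intro w hw
    have e0 := congrFun hw 0
    have e1 := congrFun hw 1
    have e2 := congrFun hw 2
    have e4 := congrFun hw 4
    simp [hJ, Matrix.mulVec, dotProduct, Fin.sum_univ_five] at e0 e1 e2 e4
    have hw2 : w 2 = 0 := by
      rcases e2 with h | h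
      · exact absurd (by linarith : -(ω + ω₁ + m + r₁) + β₁ * (S₀ + (1 - σ) * V₀) = 0) ha₃
      · exact h
    rw [hw2] at e0 e1 e4
    have hw4 : w 4 = w 3 * (r₂ / (ω + δ)) := by
      field_simp
      linear_combination -e4
    have hA0 : (ω * ω + ω * μ + ω * α) * (ω + δ) * w 0 =
        -((ω + μ) * (β₂star * S₀ * (ω + δ) - δ * r₂) +
          μ * (1 - σ) * β₂star * V₀ * (ω + δ)) * w 3 := by
      linear_combination (-(ω + μ) * (ω + δ)) * e0 + (-μ * (ω + δ)) * e1 +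
        (-(ω + μ) * δ) * e4
    have hA1 : (ω * ω + ω * μ + ω * α) * (ω + δ) * w 1 =
        -((ω + α) * (1 - σ) * β₂star * V₀ * (ω + δ) +
          α * (β₂star * S₀ * (ω + δ) - δ * r₂)) * w 3 := by
      linear_combination (-α * (ω + δ)) * e0 + (-(ω + α) * (ω + δ)) * e1 +
        (-α * δ) * e4
    funext i
    fin_cases i
    · show w 0 = w 3 * v 0
      rw [hv]
      show w 0 = w 3 * (_ / _)
      rw [mul_div_assoc'] at *
      field_simp
      linear_combination hA0
    · show w 1 = w 3 * v 1
      rw [hv]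
      show w 1 = w 3 * (_ / _)
      field_simp
      linear_combination hA1
    · show w 2 = w 3 * v 2
      rw [hv2, hw2, mul_zero]
    · show w 3 = w 3 * v 3
      rw [hv3, mul_one]
    · show w 4 = w 3 * v 4
      exact hw4
  have hvne : v ≠ 0 := by
    intro h
    have := congrFun h 3
    rw [hv3] at this
    simp at this
  have hker : LinearMap.ker (Matrix.toLin' J) = Submodule.span ℝ {v} := by
    apply le_antisymm
    · intro w hw
      rw [LinearMap.mem_ker, Matrix.toLin'_apply] at hw
      rw [Submodule.mem_span_singleton]
      exact ⟨w 3, (key w hw).symm⟩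
    · rw [Submodule.span_singleton_le_iff_mem, LinearMap.mem_ker, Matrix.toLin'_apply]
      exact hvker
  refine ⟨by rw [hker]; exact finrank_span_singleton hvne, ?_, ?_⟩
  · refine ⟨v, ⟨hvker, hv3⟩, ?_⟩
    rintro w ⟨hw, h3⟩
    have := key w hw
    rw [h3, one_smul] at this
    exact this
  · intro w hw h3
    have hkey := key w hw
    rw [h3, one_smul] at hkey
    rw [hkey]
    exact ⟨hv2, rfl⟩
end

section
/- Assume R₀₁ ≠ 1 and let J(E₀,β₂*) denote the Jacobian J₀ at the disease-free equilibrium with β₂ replaced by β₂* = ω(ω+ω₂+r₂)(μ+ω+α)/(B(μ+ω)+(1−σ)αB). Then the row vector v₁ = (0, 0, v₃₃, 1, 0) with v₃₃ = −mω(μ+ω+α)/(−(ω+ω₁+m+r₁)ω(μ+ω+α)+β₁B[(μ+ω)+α(1−σ)]) satisfies v₁·J(E₀,β₂*) = 0, i.e. v₁ is a left eigenvector of J(E₀,β₂*) for the eigenvalue 0. -/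
open Matrix

/-! At `E₀` the rows of the Jacobian belonging to `I₁` and `I₂` vanish outside the infected
columns, so `v₁ J` only involves the infected block `[[x, 0], [m, y]]` (rows `I₁`, `I₂`), where
`x = -(ω+ω₁+m+r₁) + β₁ N₀`, `y = -(ω+ω₂+r₂) + β₂ N₀` and `N₀ = S₀ + (1-σ)V₀`. The choice of
`β₂*` is exactly the one with `β₂* N₀ = ω+ω₂+r₂`, i.e. `y = 0`, and `v₃₃ = -m / x` once the
factor `ω(μ+ω+α)` is cleared; `x ≠ 0` is the condition `R₀₁ ≠ 1`. -/

lemma vecMul_of_rows_two_three {R : Type*} [Semiring R] (c x m y : R)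
    (M : Matrix (Fin 5) (Fin 5) R) (h₂ : M 2 = ![0, 0, x, 0, 0]) (h₃ : M 3 = ![0, 0, m, y, 0]) :
    vecMul ![0, 0, c, 1, 0] M = ![0, 0, c * x + m, y, 0] := by
  ext j
  fin_cases j <;>
    simp [vecMul, dotProduct, Fin.sum_univ_five, congrFun h₂, congrFun h₃]

lemma S₀_add_one_sub_mul_V₀_eq {B ω α μ σ S₀ V₀ : ℝ} (hω : ω ≠ 0)
    (hK : μ + ω + α ≠ 0) (hS₀ : S₀ = B * (μ + ω) / (ω * (μ + ω + α)))
    (hV₀ : V₀ = α * B / (ω * (μ + ω + α))) :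
    S₀ + (1 - σ) * V₀ = (B * (μ + ω) + (1 - σ) * α * B) / (ω * (μ + ω + α)) := by
  subst hS₀ hV₀
  field_simp

theorem left_eigenvector_beta2star_general
    (B ω β₁ α μ δ σ ω₁ ω₂ m r₁ r₂ : ℝ)
    (hB : 0 < B) (hω : 0 < ω) (hα : 0 < α)
    (hμ : 0 < μ) (hσ : σ ∈ Set.Ioo (0 : ℝ) 1)
    (hω₁ : 0 < ω₁) (hm : 0 < m) (hr₁ : 0 < r₁)
    (S₀ V₀ R₀₁ β₂star v₃₃ : ℝ)
    (hS₀ : S₀ = B * (μ + ω) / (ω * (μ + ω + α)))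
    (hV₀ : V₀ = α * B / (ω * (μ + ω + α)))
    (hR₀₁ : R₀₁ = β₁ * (B * (μ + ω) + (1 - σ) * α * B) /
      ((ω + ω₁ + m + r₁) * ω * (μ + ω + α)))
    (hR₀₁ne : R₀₁ ≠ 1)
    (hβ₂star : β₂star = ω * (ω + ω₂ + r₂) * (μ + ω + α) /
      (B * (μ + ω) + (1 - σ) * α * B))
    (hv₃₃ : v₃₃ = -(m * ω * (μ + ω + α)) /
      (-((ω + ω₁ + m + r₁) * ω * (μ + ω + α)) + β₁ * B * ((μ + ω) + α * (1 - σ))))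
    (J : Matrix (Fin 5) (Fin 5) ℝ)
    (hJ : J =
      !![-ω - α, μ, -β₁ * S₀, -β₂star * S₀, δ;
         α, -ω - μ, -(1 - σ) * β₁ * V₀, -(1 - σ) * β₂star * V₀, 0;
         0, 0, -(ω + ω₁ + m + r₁) + β₁ * (S₀ + (1 - σ) * V₀), 0, 0;
         0, 0, m, -(ω + ω₂ + r₂) + β₂star * (S₀ + (1 - σ) * V₀), 0;
         0, 0, r₁, r₂, -ω - δ]) :
    Matrix.vecMul ![0, 0, v₃₃, 1, 0] J = 0 := by
  have hK : 0 < μ + ω + α := by positivity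
  have hD : 0 < B * (μ + ω) + (1 - σ) * α * B := by
    have : 0 < 1 - σ := sub_pos.2 hσ.2
    positivity
  have hN := S₀_add_one_sub_mul_V₀_eq (σ := σ) hω.ne' hK.ne' hS₀ hV₀
  have hcrit : -((ω + ω₁ + m + r₁) * ω * (μ + ω + α)) + β₁ * B * ((μ + ω) + α * (1 - σ)) ≠ 0 := by
    refine fun h ↦ hR₀₁ne (hR₀₁ ▸ (div_eq_one_iff_eq (by positivity)).2 ?_)
    linear_combination h
  have hI₂ : -(ω + ω₂ + r₂) + β₂star * (S₀ + (1 - σ) * V₀) = 0 := by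
    rw [hβ₂star, hN, div_mul_div_comm, neg_add_eq_zero, eq_div_iff (by positivity)]
    ring
  have hI₁ : v₃₃ * (-(ω + ω₁ + m + r₁) + β₁ * (S₀ + (1 - σ) * V₀)) + m = 0 := by
    have hx : -(ω + ω₁ + m + r₁) + β₁ * (S₀ + (1 - σ) * V₀) =
        (-((ω + ω₁ + m + r₁) * ω * (μ + ω + α)) + β₁ * B * ((μ + ω) + α * (1 - σ))) /
          (ω * (μ + ω + α)) := by
      rw [hN]
      field_simp
    rw [hv₃₃, hx, div_mul_div_cancel₀ hcrit]
    field_simp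
    ring
  rw [vecMul_of_rows_two_three _ _ _ _ J (by rw [hJ]; rfl) (by rw [hJ]; rfl), hI₁, hI₂]
  ext j
  fin_cases j <;> rfl

/-- If R₀₁ ≠ 1, the row vector v₁ = (0, 0, v₃₃, 1, 0) with
v₃₃ = −mω(μ+ω+α)/(−(ω+ω₁+m+r₁)ω(μ+ω+α)+β₁B((μ+ω)+α(1−σ))) is a left
eigenvector of J(E₀,β₂*) for the eigenvalue 0. -/
theorem left_eigenvector_beta2star
    (B ω β₁ α μ δ σ ω₁ ω₂ m r₁ r₂ : ℝ)
    (hB : 0 < B) (hω : 0 < ω) (hβ₁ : 0 < β₁) (hα : 0 < α)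
    (hμ : 0 < μ) (hδ : 0 < δ) (hσ : σ ∈ Set.Ioo (0 : ℝ) 1)
    (hω₁ : 0 < ω₁) (hω₂ : 0 < ω₂) (hm : 0 < m) (hr₁ : 0 < r₁) (hr₂ : 0 < r₂)
    (S₀ V₀ R₀₁ β₂star v₃₃ : ℝ)
    (hS₀ : S₀ = B * (μ + ω) / (ω * (μ + ω + α)))
    (hV₀ : V₀ = α * B / (ω * (μ + ω + α)))
    (hR₀₁ : R₀₁ = β₁ * (B * (μ + ω) + (1 - σ) * α * B) /
      ((ω + ω₁ + m + r₁) * ω * (μ + ω + α)))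
    (hR₀₁ne : R₀₁ ≠ 1)
    (hβ₂star : β₂star = ω * (ω + ω₂ + r₂) * (μ + ω + α) /
      (B * (μ + ω) + (1 - σ) * α * B))
    (hv₃₃ : v₃₃ = -(m * ω * (μ + ω + α)) /
      (-((ω + ω₁ + m + r₁) * ω * (μ + ω + α)) + β₁ * B * ((μ + ω) + α * (1 - σ))))
    (J : Matrix (Fin 5) (Fin 5) ℝ)
    (hJ : J =
      !![-ω - α, μ, -β₁ * S₀, -β₂star * S₀, δ;
         α, -ω - μ, -(1 - σ) * β₁ * V₀, -(1 - σ) * β₂star * V₀, 0;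
         0, 0, -(ω + ω₁ + m + r₁) + β₁ * (S₀ + (1 - σ) * V₀), 0, 0;
         0, 0, m, -(ω + ω₂ + r₂) + β₂star * (S₀ + (1 - σ) * V₀), 0;
         0, 0, r₁, r₂, -ω - δ]) :
    Matrix.vecMul ![0, 0, v₃₃, 1, 0] J = 0 :=
  left_eigenvector_beta2star_general B ω β₁ α μ δ σ ω₁ ω₂ m r₁ r₂ hB hω hα hμ hσ hω₁ hm hr₁ S₀ V₀
    R₀₁ β₂star v₃₃ hS₀ hV₀ hR₀₁ hR₀₁ne hβ₂star hv₃₃ J hJ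
end

section
/- (Signs of the sensitivity indices of R₀₁, Table 7.1) Viewing R₀₁ = β₁(B(μ+ω)+(1−σ)αB)/((ω+ω₁+m+r₁)ω(μ+ω+α)) as a function of the positive parameters, the normalized sensitivity indices Z_p = (p/R₀₁)·∂R₀₁/∂p are given by: Z_{β₁} = 1, Z_B = 1, Z_{r₁} = −r₁/(ω+ω₁+m+r₁), Z_m = −m/(ω+ω₁+m+r₁), Z_{ω₁} = −ω₁/(ω+ω₁+m+r₁), Z_σ = −σα/((μ+ω)+(1−σ)α), Z_μ = μσα/((μ+ω+α)((μ+ω)+(1−σ)α)), and Z_α = −ασ(μ+ω)/((μ+ω+α)((μ+ω)+(1−σ)α)); in particular Z_{β₁}, Z_B, Z_μ > 0 and Z_{r₁}, Z_m, Z_{ω₁}, Z_σ, Z_α < 0. -/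
set_option maxHeartbeats 2000000 in
/-- Signs and values of the normalized sensitivity indices Z_p = (p/R₀₁)·∂R₀₁/∂p
of R₀₁ = β₁(B(μ+ω)+(1−σ)αB)/((ω+ω₁+m+r₁)ω(μ+ω+α)) with respect to each
parameter (Table 7.1). -/
theorem sensitivity_indices_R01
    (B ω β₁ β₂ α μ δ σ ω₁ ω₂ m r₁ r₂ : ℝ)
    (hB : 0 < B) (hω : 0 < ω) (hβ₁ : 0 < β₁) (hβ₂ : 0 < β₂) (hα : 0 < α)
    (hμ : 0 < μ) (hδ : 0 < δ) (hσ : σ ∈ Set.Ioo (0 : ℝ) 1)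
    (hω₁ : 0 < ω₁) (hω₂ : 0 < ω₂) (hm : 0 < m) (hr₁ : 0 < r₁) (hr₂ : 0 < r₂)
    (R₀₁ : ℝ)
    (hR₀₁ : R₀₁ = β₁ * (B * (μ + ω) + (1 - σ) * α * B) /
      ((ω + ω₁ + m + r₁) * ω * (μ + ω + α))) :
    ((β₁ / R₀₁) * deriv (fun x => x * (B * (μ + ω) + (1 - σ) * α * B) /
        ((ω + ω₁ + m + r₁) * ω * (μ + ω + α))) β₁ = 1) ∧
    ((B / R₀₁) * deriv (fun x => β₁ * (x * (μ + ω) + (1 - σ) * α * x) /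
        ((ω + ω₁ + m + r₁) * ω * (μ + ω + α))) B = 1) ∧
    ((r₁ / R₀₁) * deriv (fun x => β₁ * (B * (μ + ω) + (1 - σ) * α * B) /
        ((ω + ω₁ + m + x) * ω * (μ + ω + α))) r₁
      = -r₁ / (ω + ω₁ + m + r₁)) ∧
    ((m / R₀₁) * deriv (fun x => β₁ * (B * (μ + ω) + (1 - σ) * α * B) /
        ((ω + ω₁ + x + r₁) * ω * (μ + ω + α))) m
      = -m / (ω + ω₁ + m + r₁)) ∧
    ((ω₁ / R₀₁) * deriv (fun x => β₁ * (B * (μ + ω) + (1 - σ) * α * B) /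
        ((ω + x + m + r₁) * ω * (μ + ω + α))) ω₁
      = -ω₁ / (ω + ω₁ + m + r₁)) ∧
    ((σ / R₀₁) * deriv (fun x => β₁ * (B * (μ + ω) + (1 - x) * α * B) /
        ((ω + ω₁ + m + r₁) * ω * (μ + ω + α))) σ
      = -(σ * α) / ((μ + ω) + (1 - σ) * α)) ∧
    ((μ / R₀₁) * deriv (fun x => β₁ * (B * (x + ω) + (1 - σ) * α * B) /
        ((ω + ω₁ + m + r₁) * ω * (x + ω + α))) μ
      = μ * σ * α / ((μ + ω + α) * ((μ + ω) + (1 - σ) * α))) ∧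
    ((α / R₀₁) * deriv (fun x => β₁ * (B * (μ + ω) + (1 - σ) * x * B) /
        ((ω + ω₁ + m + r₁) * ω * (μ + ω + x))) α
      = -(α * σ * (μ + ω)) / ((μ + ω + α) * ((μ + ω) + (1 - σ) * α))) ∧
    (0 < (1 : ℝ)) ∧
    (0 < μ * σ * α / ((μ + ω + α) * ((μ + ω) + (1 - σ) * α))) ∧
    (-r₁ / (ω + ω₁ + m + r₁) < 0) ∧
    (-m / (ω + ω₁ + m + r₁) < 0) ∧
    (-ω₁ / (ω + ω₁ + m + r₁) < 0) ∧
    (-(σ * α) / ((μ + ω) + (1 - σ) * α) < 0) ∧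
    (-(α * σ * (μ + ω)) / ((μ + ω + α) * ((μ + ω) + (1 - σ) * α)) < 0) := by

  obtain ⟨hσ0, hσ1⟩ := hσ
  have h1σ : (0:ℝ) < 1 - σ := by linarith
  have hK : (0:ℝ) < ω + ω₁ + m + r₁ := by linarith
  have hD : (0:ℝ) < μ + ω + α := by linarith
  have hE : (0:ℝ) < (μ + ω) + (1 - σ) * α := by positivity
  have hRpos : (0:ℝ) < R₀₁ := by
    rw [hR₀₁]; positivity
  have hR : R₀₁ ≠ 0 := hRpos.ne'
  -- derivative 1 (β₁)
  have d1 : deriv (fun x => x * (B * (μ + ω) + (1 - σ) * α * B) /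
      ((ω + ω₁ + m + r₁) * ω * (μ + ω + α))) β₁
      = (B * (μ + ω) + (1 - σ) * α * B) / ((ω + ω₁ + m + r₁) * ω * (μ + ω + α)) := by
    have h := ((hasDerivAt_id β₁).mul_const (B * (μ + ω) + (1 - σ) * α * B)).div_const
      ((ω + ω₁ + m + r₁) * ω * (μ + ω + α))
    simpa using h.deriv
  -- derivative 2 (B)
  have d2 : deriv (fun x => β₁ * (x * (μ + ω) + (1 - σ) * α * x) /
      ((ω + ω₁ + m + r₁) * ω * (μ + ω + α))) B
      = β₁ * ((μ + ω) + (1 - σ) * α) / ((ω + ω₁ + m + r₁) * ω * (μ + ω + α)) := by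
    have h := ((((hasDerivAt_id B).mul_const (μ + ω)).add
      ((hasDerivAt_id B).const_mul ((1 - σ) * α))).const_mul β₁).div_const
      ((ω + ω₁ + m + r₁) * ω * (μ + ω + α))
    simpa [mul_add] using h.deriv
  -- derivative 3 (r₁)
  have d3 : deriv (fun x => β₁ * (B * (μ + ω) + (1 - σ) * α * B) /
      ((ω + ω₁ + m + x) * ω * (μ + ω + α))) r₁
      = (0 * ((ω + ω₁ + m + r₁) * ω * (μ + ω + α))
        - β₁ * (B * (μ + ω) + (1 - σ) * α * B) * (1 * ω * (μ + ω + α)))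
        / ((ω + ω₁ + m + r₁) * ω * (μ + ω + α)) ^ 2 := by
    have hden : HasDerivAt (fun x => (ω + ω₁ + m + x) * ω * (μ + ω + α))
        (1 * ω * (μ + ω + α)) r₁ :=
      (((hasDerivAt_id r₁).const_add (ω + ω₁ + m)).mul_const ω).mul_const (μ + ω + α)
    exact ((hasDerivAt_const r₁ (β₁ * (B * (μ + ω) + (1 - σ) * α * B))).div hden
      (by positivity)).deriv
  -- derivative 4 (m)
  have d4 : deriv (fun x => β₁ * (B * (μ + ω) + (1 - σ) * α * B) /
      ((ω + ω₁ + x + r₁) * ω * (μ + ω + α))) m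
      = (0 * ((ω + ω₁ + m + r₁) * ω * (μ + ω + α))
        - β₁ * (B * (μ + ω) + (1 - σ) * α * B) * (1 * ω * (μ + ω + α)))
        / ((ω + ω₁ + m + r₁) * ω * (μ + ω + α)) ^ 2 := by
    have hden : HasDerivAt (fun x => (ω + ω₁ + x + r₁) * ω * (μ + ω + α))
        (1 * ω * (μ + ω + α)) m :=
      ((((hasDerivAt_id m).const_add (ω + ω₁)).add_const r₁).mul_const ω).mul_const (μ + ω + α)
    exact ((hasDerivAt_const m (β₁ * (B * (μ + ω) + (1 - σ) * α * B))).div hden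
      (by positivity)).deriv
  -- derivative 5 (ω₁)
  have d5 : deriv (fun x => β₁ * (B * (μ + ω) + (1 - σ) * α * B) /
      ((ω + x + m + r₁) * ω * (μ + ω + α))) ω₁
      = (0 * ((ω + ω₁ + m + r₁) * ω * (μ + ω + α))
        - β₁ * (B * (μ + ω) + (1 - σ) * α * B) * (1 * ω * (μ + ω + α)))
        / ((ω + ω₁ + m + r₁) * ω * (μ + ω + α)) ^ 2 := by
    have hden : HasDerivAt (fun x => (ω + x + m + r₁) * ω * (μ + ω + α))
        (1 * ω * (μ + ω + α)) ω₁ :=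
      (((((hasDerivAt_id ω₁).const_add ω).add_const m).add_const r₁).mul_const ω).mul_const
        (μ + ω + α)
    exact ((hasDerivAt_const ω₁ (β₁ * (B * (μ + ω) + (1 - σ) * α * B))).div hden
      (by positivity)).deriv
  -- derivative 6 (σ)
  have d6 : deriv (fun x => β₁ * (B * (μ + ω) + (1 - x) * α * B) /
      ((ω + ω₁ + m + r₁) * ω * (μ + ω + α))) σ
      = β₁ * (-1 * α * B) / ((ω + ω₁ + m + r₁) * ω * (μ + ω + α)) := by
    have h := (((((hasDerivAt_id σ).const_sub 1).mul_const α).mul_const B).const_add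
      (B * (μ + ω))).const_mul β₁
    simpa using (h.div_const ((ω + ω₁ + m + r₁) * ω * (μ + ω + α))).deriv
  -- derivative 7 (μ)
  have d7 : deriv (fun x => β₁ * (B * (x + ω) + (1 - σ) * α * B) /
      ((ω + ω₁ + m + r₁) * ω * (x + ω + α))) μ
      = (β₁ * (B * 1) * ((ω + ω₁ + m + r₁) * ω * (μ + ω + α))
        - β₁ * (B * (μ + ω) + (1 - σ) * α * B) * ((ω + ω₁ + m + r₁) * ω * 1))
        / ((ω + ω₁ + m + r₁) * ω * (μ + ω + α)) ^ 2 := by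
    have hnum : HasDerivAt (fun x => β₁ * (B * (x + ω) + (1 - σ) * α * B))
        (β₁ * (B * 1)) μ := by
      have := ((((hasDerivAt_id μ).add_const ω).const_mul B).add_const
        ((1 - σ) * α * B)).const_mul β₁
      simpa using this
    have hden : HasDerivAt (fun x => (ω + ω₁ + m + r₁) * ω * (x + ω + α))
        ((ω + ω₁ + m + r₁) * ω * 1) μ := by
      have := (((hasDerivAt_id μ).add_const ω).add_const α).const_mul
        ((ω + ω₁ + m + r₁) * ω)
      simpa using this
    exact (hnum.div hden (by positivity)).deriv
  -- derivative 8 (α)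
  have d8 : deriv (fun x => β₁ * (B * (μ + ω) + (1 - σ) * x * B) /
      ((ω + ω₁ + m + r₁) * ω * (μ + ω + x))) α
      = (β₁ * ((1 - σ) * B) * ((ω + ω₁ + m + r₁) * ω * (μ + ω + α))
        - β₁ * (B * (μ + ω) + (1 - σ) * α * B) * ((ω + ω₁ + m + r₁) * ω * 1))
        / ((ω + ω₁ + m + r₁) * ω * (μ + ω + α)) ^ 2 := by
    have hnum : HasDerivAt (fun x => β₁ * (B * (μ + ω) + (1 - σ) * x * B))
        (β₁ * ((1 - σ) * B)) α := by
      have := ((((hasDerivAt_id α).const_mul (1 - σ)).mul_const B).const_add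
        (B * (μ + ω))).const_mul β₁
      simpa [mul_assoc] using this
    have hden : HasDerivAt (fun x => (ω + ω₁ + m + r₁) * ω * (μ + ω + x))
        ((ω + ω₁ + m + r₁) * ω * 1) α := by
      have := ((hasDerivAt_id α).const_add (μ + ω)).const_mul ((ω + ω₁ + m + r₁) * ω)
      simpa using this
    exact (hnum.div hden (by positivity)).deriv
  refine ⟨?_, ?_, ?_, ?_, ?_, ?_, ?_, ?_, one_pos, by positivity, ?_, ?_, ?_, ?_, ?_⟩
  · rw [d1, hR₀₁]; field_simp
  · rw [d2, hR₀₁]; field_simp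
  · rw [d3, hR₀₁]; field_simp; ring
  · rw [d4, hR₀₁]; field_simp; ring
  · rw [d5, hR₀₁]; field_simp; ring
  · rw [d6, hR₀₁]; field_simp
  · rw [d7, hR₀₁]; field_simp; ring
  · rw [d8, hR₀₁]; field_simp; ring
  · exact div_neg_of_neg_of_pos (by linarith) hK
  · exact div_neg_of_neg_of_pos (by linarith) hK
  · exact div_neg_of_neg_of_pos (by linarith) hK
  · exact div_neg_of_neg_of_pos (neg_lt_zero.mpr (by positivity)) hE
  · exact div_neg_of_neg_of_pos (neg_lt_zero.mpr (by positivity)) (by positivity)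
end
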